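/- arXiv:1109.5512 — 5 statements merged into one kernel-verified Lean document; each statement's English description precedes it below -/
import Mathlib

section
/- Let (Ω,ℱ,ℙ) be a probability space, P ≪ ℙ a probability measure and Q ≪ P a probability measure with generalized entropy V(Q|P) = E_P[V(dQ/dP)] < ∞, where U satisfies the Inada conditions and the reasonable asymptotic elasticity condition. Let (k^n)_{n∈ℕ} be a sequence of real-valued random variables such that each k^n ∈ L¹(Q) with E_Q[k^n] ≤ 0, each U(k^n)⁻ ∈ L¹(P), and inf_n E_P[U(k^n)] > −∞. Then (a) the sequence (k^n) is bounded in L¹(Q), i.e. sup_n E_Q[|k^n|] < ∞, and (b) the sequence (U(k^n)) is bounded in L¹(P), i.e. sup_n E_P[|U(k^n)|] < ∞. -/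
open MeasureTheory Filter Set

/-! Write `Z = dQ/dP`, so that `E_Q[kⁿ] = E_P[Z kⁿ]`. The Fenchel inequality
`U x - x y ≤ V y` at `y = Z` bounds `U(kⁿ)⁺` by `|V(Z)| + (Z kⁿ)⁺`. Reasonable asymptotic
elasticity at `-∞` gives `γ > 1` with `U(l x) ≤ l ^ γ U(x)` for `l ≥ 1` and `x ≤ x₀ < 0`;
for `c ^ (γ - 1) = 2` this is `U(c x) ≤ 2 c U(x)`, whence the doubling bound
`U x - 2 x y ≤ 2 c |V y| + c |x₀| y`, which bounds `2 (Z kⁿ)⁻` by an integrable function plus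
`U(kⁿ)⁻`. After integration, these two bounds together with `E_Q[kⁿ] ≤ 0` and the lower
bound on `E_P[U(kⁿ)]` form a linear system for the integrals of the positive and negative
parts of `Z kⁿ` and `U(kⁿ)`, which bounds all four uniformly in `n`. -/

theorem ConcaveOn.le_add_deriv_mul_sub {f : ℝ → ℝ} {S : Set ℝ} {a x : ℝ}
    (hf : ConcaveOn ℝ S f) (ha : a ∈ S) (hx : x ∈ S) (hfa : DifferentiableAt ℝ f a) :
    f x ≤ f a + deriv f a * (x - a) := by
  rcases lt_trichotomy x a with hxa | rfl | hax
  · have h := hf.deriv_le_slope hx ha hxa hfa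
    rw [slope_def_field, le_div_iff₀ (sub_pos.2 hxa)] at h
    linarith
  · simp
  · have h := hf.slope_le_deriv ha hx hax hfa
    rw [slope_def_field, div_le_iff₀ (sub_pos.2 hax)] at h
    linarith

theorem ConcaveOn.tendsto_atBot_of_deriv_pos {f : ℝ → ℝ} {a : ℝ} (hf : ConcaveOn ℝ univ f)
    (hfa : DifferentiableAt ℝ f a) (ha : 0 < deriv f a) : Tendsto f atBot atBot :=
  tendsto_atBot_mono (fun x => hf.le_add_deriv_mul_sub (mem_univ a) (mem_univ x) hfa) <|
    tendsto_atBot_add_const_left _ _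
      ((tendsto_atBot_add_const_right _ _ tendsto_id).const_mul_atBot ha)

theorem ConcaveOn.bddAbove_range_sub_mul {f : ℝ → ℝ} {y : ℝ} (hf : ConcaveOn ℝ univ f)
    (hd : Differentiable ℝ f) (hbot : Tendsto (deriv f) atBot atTop)
    (htop : Tendsto (deriv f) atTop (nhds 0)) (hy : 0 < y) :
    BddAbove (range fun x => f x - x * y) := by
  obtain ⟨a, ha⟩ := (htop.eventually_lt_const hy).exists
  obtain ⟨b, hb⟩ := (hbot.eventually_gt_atTop y).exists
  refine ⟨max (f a - deriv f a * a) (f b - deriv f b * b), ?_⟩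
  rintro _ ⟨x, rfl⟩
  have hta := hf.le_add_deriv_mul_sub (mem_univ a) (mem_univ x) (hd a)
  have htb := hf.le_add_deriv_mul_sub (mem_univ b) (mem_univ x) (hd b)
  rcases le_total 0 x with hx | hx
  · exact le_max_of_le_left (by nlinarith)
  · exact le_max_of_le_right (by nlinarith)

theorem le_rpow_mul_of_mul_deriv_le {f : ℝ → ℝ} {γ x₀ : ℝ} (hx₀ : x₀ < 0)
    (hd : ∀ x ≤ x₀, DifferentiableAt ℝ f x) (hneg : ∀ x ≤ x₀, f x < 0)
    (hγ : ∀ x ≤ x₀, x * deriv f x ≤ γ * f x) {l x : ℝ} (hl : 1 ≤ l) (hx : x ≤ x₀) :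
    f (l * x) ≤ l ^ γ * f x := by
  set F : ℝ → ℝ := fun s => Real.log (-f s) - γ * Real.log (-s)
  have hF : ∀ t ≤ x₀, HasDerivAt F ((t * deriv f t - γ * f t) / (t * f t)) t := by
    intro t ht
    have h₁ : HasDerivAt F (-deriv f t / -f t - γ * (-1 / -t)) t :=
      ((hd t ht).hasDerivAt.neg.log (neg_ne_zero.2 (hneg t ht).ne)).sub
        (((hasDerivAt_id t).neg.log (neg_ne_zero.2 (by simp; linarith))).const_mul γ)
    refine h₁.congr_deriv ?_
    have := (hneg t ht).ne
    have : t ≠ 0 := by linarith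
    field_simp
  have hanti : AntitoneOn F (Iic x₀) := by
    refine antitoneOn_of_deriv_nonpos (convex_Iic x₀)
      (fun t ht => (hF t ht).continuousAt.continuousWithinAt) ?_ ?_ <;>
    intro t ht <;> rw [interior_Iic] at ht
    · exact (hF t ht.le).differentiableAt.differentiableWithinAt
    · rw [(hF t ht.le).deriv]
      exact div_nonpos_of_nonpos_of_nonneg (by linarith [hγ t ht.le])
        (mul_nonneg_of_nonpos_of_nonpos (by linarith [mem_Iio.1 ht]) (hneg t ht.le).le)
  have hlx : l * x ≤ x := by nlinarith
  have hmono : F x ≤ F (l * x) := hanti (hlx.trans hx) hx hlx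
  have hl₀ : 0 < l := by linarith
  have hfx := hneg x hx
  have hflx := hneg (l * x) (hlx.trans hx)
  have hlog : Real.log (-f x * l ^ γ) ≤ Real.log (-f (l * x)) := by
    rw [Real.log_mul (by linarith) (Real.rpow_pos_of_pos hl₀ γ).ne', Real.log_rpow hl₀]
    simp only [F, show -(l * x) = l * -x by ring] at hmono
    rw [Real.log_mul hl₀.ne' (by linarith)] at hmono
    linarith
  have := (Real.log_le_log_iff (by nlinarith [Real.rpow_pos_of_pos hl₀ γ]) (by linarith)).1 hlog
  linarith

theorem exists_mul_deriv_le_mul_of_one_lt_liminf {U : ℝ → ℝ} (hUdiff : Differentiable ℝ U)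
    (hUconc : ConcaveOn ℝ univ U) (hInada : Tendsto (deriv U) atBot atTop)
    (hRAE : 1 < liminf (fun x => ((x * deriv U x / U x : ℝ) : EReal)) atBot) :
    ∃ γ x₀ : ℝ, 1 < γ ∧ x₀ < 0 ∧ ∀ x ≤ x₀, U x < 0 ∧ x * deriv U x ≤ γ * U x := by
  obtain ⟨γ, hγ₁, hγ⟩ := EReal.lt_iff_exists_real_btwn.1 hRAE
  obtain ⟨a, ha⟩ := (hInada.eventually_gt_atTop 0).exists
  have hUneg : ∀ᶠ x in atBot, U x < 0 :=
    (hUconc.tendsto_atBot_of_deriv_pos (hUdiff a) ha).eventually_lt_atBot 0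
  obtain ⟨x₀, hx₀⟩ := eventually_atBot.1
    ((eventually_lt_of_lt_liminf hγ).and (hUneg.and (eventually_lt_atBot 0)))
  refine ⟨γ, x₀, EReal.coe_lt_coe_iff.1 hγ₁, (hx₀ x₀ le_rfl).2.2, fun x hx => ?_⟩
  obtain ⟨hratio, hUx, -⟩ := hx₀ x hx
  exact ⟨hUx, ((lt_div_iff_of_neg hUx).1 (EReal.coe_lt_coe_iff.1 hratio)).le⟩

theorem exists_le_two_mul_mul_of_one_lt_liminf {U : ℝ → ℝ} (hUdiff : Differentiable ℝ U)
    (hUconc : ConcaveOn ℝ univ U) (hInada : Tendsto (deriv U) atBot atTop)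
    (hRAE : 1 < liminf (fun x => ((x * deriv U x / U x : ℝ) : EReal)) atBot) :
    ∃ c x₀ : ℝ, 1 ≤ c ∧ x₀ ≤ 0 ∧ ∀ u ≤ x₀, U (c * u) ≤ 2 * c * U u := by
  obtain ⟨γ, x₀, hγ, hx₀, hU⟩ := exists_mul_deriv_le_mul_of_one_lt_liminf hUdiff hUconc hInada hRAE
  set c : ℝ := 2 ^ (1 / (γ - 1))
  have hc : 1 ≤ c := Real.one_le_rpow (by norm_num) (by rw [one_div_nonneg]; linarith)
  have hcγ : c ^ γ = 2 * c := by
    rw [← Real.rpow_mul (by norm_num), show 1 / (γ - 1) * γ = 1 + 1 / (γ - 1) by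
      field_simp [(sub_pos.2 hγ).ne']; ring, Real.rpow_add (by norm_num), Real.rpow_one]
  refine ⟨c, x₀, hc, hx₀.le, fun u hu => ?_⟩
  simpa only [hcγ] using le_rpow_mul_of_mul_deriv_le hx₀ (fun x _ => hUdiff x)
    (fun x hx => (hU x hx).1) (fun x hx => (hU x hx).2) hc hu

theorem sub_mul_two_mul_le {U : ℝ → ℝ} {c x₀ y v : ℝ} (hc : 1 ≤ c) (hx₀ : x₀ ≤ 0)
    (hscale : ∀ u ≤ x₀, U (c * u) ≤ 2 * c * U u) (hy : 0 ≤ y)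
    (hv : ∀ x, U x - x * y ≤ v) (x : ℝ) :
    U x - x * (2 * y) ≤ 2 * c * |v| + c * -x₀ * y := by
  have hc₀ : 0 < c := by linarith
  have hrest : 0 ≤ c * -x₀ * y := mul_nonneg (mul_nonneg hc₀.le (neg_nonneg.2 hx₀)) hy
  rcases le_or_gt x (c * x₀) with hx | hx
  · have hu : x / c ≤ x₀ := by rwa [div_le_iff₀' hc₀]
    calc U x - x * (2 * y) = U (c * (x / c)) - 2 * c * (x / c * y) := by
          rw [mul_div_cancel₀ x hc₀.ne']; field_simp
      _ ≤ 2 * c * (U (x / c) - x / c * y) := by linarith [hscale (x / c) hu]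
      _ ≤ 2 * c * |v| :=
          mul_le_mul_of_nonneg_left ((hv (x / c)).trans (le_abs_self v)) (by positivity)
      _ ≤ 2 * c * |v| + c * -x₀ * y := le_add_of_nonneg_right hrest
  · have h₁ : -x * y ≤ c * -x₀ * y := mul_le_mul_of_nonneg_right (by linarith) hy
    have h₂ : |v| ≤ 2 * c * |v| := le_mul_of_one_le_left (abs_nonneg v) (by linarith)
    linarith [hv x, le_abs_self v]

theorem max_zero_le_abs_add_max_mul {u r y v : ℝ} (hv : u - r * y ≤ v) :
    max u 0 ≤ |v| + max (y * r) 0 :=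
  max_le (by linarith [le_abs_self v, le_max_left (y * r) 0])
    (add_nonneg (abs_nonneg v) (le_max_right _ _))

theorem two_mul_max_neg_mul_le {U : ℝ → ℝ} {c x₀ y v : ℝ} (hc : 1 ≤ c) (hx₀ : x₀ ≤ 0)
    (hscale : ∀ u ≤ x₀, U (c * u) ≤ 2 * c * U u) (hy : 0 ≤ y)
    (hv : ∀ x, U x - x * y ≤ v) (r : ℝ) :
    2 * max (-(y * r)) 0 ≤ 2 * c * |v| + c * -x₀ * y + max (-U r) 0 := by
  have hdouble := sub_mul_two_mul_le hc hx₀ hscale hy hv r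
  rcases le_total (y * r) 0 with h | h
  · rw [max_eq_left (neg_nonneg.2 h)]
    linarith [le_max_left (-U r) 0]
  · have hG : 0 ≤ 2 * c * |v| + c * -x₀ * y :=
      add_nonneg (mul_nonneg (by linarith) (abs_nonneg v))
        (mul_nonneg (mul_nonneg (by linarith) (by linarith)) hy)
    rw [max_eq_right (neg_nonpos.2 h)]
    linarith [le_max_right (-U r) 0]

theorem sub_mul_le_conjugate {U V : ℝ → ℝ}
    (hbdd : ∀ y : ℝ, 0 < y → BddAbove (range fun x => U x - x * y))
    (hV : ∀ y : ℝ, 0 < y → V y = ⨆ x : ℝ, (U x - x * y))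
    (hV0 : BddAbove (range U) → V 0 = sSup (range U)) {y : ℝ} (hy : 0 ≤ y)
    (hy₀ : y = 0 → BddAbove (range U)) (x : ℝ) :
    U x - x * y ≤ V y := by
  rcases hy.eq_or_lt with rfl | hy
  · rw [mul_zero, sub_zero, hV0 (hy₀ rfl)]
    exact le_csSup (hy₀ rfl) ⟨x, rfl⟩
  · rw [hV y hy]
    exact le_ciSup (hbdd y hy) x

section Integration

variable {Ω : Type*} [MeasurableSpace Ω] {P : Measure Ω}

theorem ae_sub_mul_rnDeriv_le_conjugate {Q : Measure Ω} [SigmaFinite Q] {U V : ℝ → ℝ}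
    (hbdd : ∀ y : ℝ, 0 < y → BddAbove (range fun x => U x - x * y))
    (hV : ∀ y : ℝ, 0 < y → V y = ⨆ x : ℝ, (U x - x * y))
    (hV0 : BddAbove (range U) → V 0 = sSup (range U))
    (hpos : ¬ BddAbove (range U) → ∀ᵐ ω ∂P, 0 < Q.rnDeriv P ω) :
    ∀ᵐ ω ∂P, ∀ x, U x - x * (Q.rnDeriv P ω).toReal ≤ V (Q.rnDeriv P ω).toReal := by
  have hy₀ : ∀ᵐ ω ∂P, (Q.rnDeriv P ω).toReal = 0 → BddAbove (range U) := by
    by_cases hb : BddAbove (range U)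
    · exact Eventually.of_forall fun _ _ => hb
    · filter_upwards [hpos hb, Measure.rnDeriv_lt_top Q P] with ω h₀ htop hZ
      exact absurd hZ (ENNReal.toReal_pos h₀.ne' htop.ne).ne'
  filter_upwards [hy₀] with ω hω x using
    sub_mul_le_conjugate hbdd hV hV0 ENNReal.toReal_nonneg hω x

theorem MeasureTheory.Integrable.of_max_zero_le {g B : Ω → ℝ} (hg : AEStronglyMeasurable g P)
    (hneg : Integrable (fun ω => max (-g ω) 0) P) (hB : Integrable B P)
    (h : ∀ᵐ ω ∂P, max (g ω) 0 ≤ B ω) : Integrable g P := by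
  have hpos : Integrable (fun ω => max (g ω) 0) P :=
    hB.mono' (hg.aemeasurable.max aemeasurable_const).aestronglyMeasurable
      (by filter_upwards [h] with ω hω; rwa [Real.norm_of_nonneg (le_max_right _ _)])
  refine (hpos.sub hneg).congr (Eventually.of_forall fun ω => ?_)
  exact max_zero_sub_max_neg_zero_eq_self (g ω)

theorem neg_max_le_integral_of_lintegral_le {g : Ω → ℝ} {c : ℝ} (hg : Integrable g P)
    (h : ∫⁻ ω, ENNReal.ofReal (-g ω) ∂P ≤ ∫⁻ ω, ENNReal.ofReal (g ω) ∂P + ENNReal.ofReal c) :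
    -max c 0 ≤ ∫ ω, g ω ∂P := by
  have h' := ENNReal.toReal_mono (ENNReal.add_ne_top.2 ⟨hg.lintegral_lt_top.ne,
    ENNReal.ofReal_ne_top⟩) h
  rw [ENNReal.toReal_add hg.lintegral_lt_top.ne ENNReal.ofReal_ne_top,
    ENNReal.toReal_ofReal'] at h'
  rw [integral_eq_lintegral_pos_part_sub_lintegral_neg_part hg]
  linarith

theorem integral_abs_le_of_max_zero_le {φ g A G : Ω → ℝ} {c : ℝ} (hφ : Integrable φ P)
    (hφ₀ : ∫ ω, φ ω ∂P ≤ 0) (hg : Integrable g P) (hgc : -c ≤ ∫ ω, g ω ∂P)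
    (hA : Integrable A P) (hG : Integrable G P)
    (h₁ : ∀ᵐ ω ∂P, max (g ω) 0 ≤ A ω + max (φ ω) 0)
    (h₂ : ∀ᵐ ω ∂P, 2 * max (-φ ω) 0 ≤ G ω + max (-g ω) 0) :
    ∫ ω, |φ ω| ∂P ≤ 2 * (∫ ω, A ω ∂P + ∫ ω, G ω ∂P + c) ∧
      ∫ ω, |g ω| ∂P ≤ 4 * ∫ ω, A ω ∂P + 2 * ∫ ω, G ω ∂P + 3 * c := by
  have hsplit : ∀ {f : Ω → ℝ}, Integrable f P →
      ∫ ω, f ω ∂P = ∫ ω, max (f ω) 0 ∂P - ∫ ω, max (-f ω) 0 ∂P ∧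
      ∫ ω, |f ω| ∂P = ∫ ω, max (f ω) 0 ∂P + ∫ ω, max (-f ω) 0 ∂P := fun hf =>
    ⟨by simp only [← integral_sub hf.pos_part hf.neg_part, max_zero_sub_max_neg_zero_eq_self],
     by simp only [← integral_add hf.pos_part hf.neg_part, max_zero_add_max_neg_zero_eq_abs_self]⟩
  obtain ⟨hφ_int, hφ_abs⟩ := hsplit hφ
  obtain ⟨hg_int, hg_abs⟩ := hsplit hg
  have hpos : ∫ ω, max (g ω) 0 ∂P ≤ ∫ ω, A ω + max (φ ω) 0 ∂P :=
    integral_mono_ae hg.pos_part (hA.add hφ.pos_part) h₁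
  have hneg : ∫ ω, 2 * max (-φ ω) 0 ∂P ≤ ∫ ω, G ω + max (-g ω) 0 ∂P :=
    integral_mono_ae (hφ.neg_part.const_mul 2) (hG.add hg.neg_part) h₂
  rw [integral_add hA hφ.pos_part] at hpos
  rw [integral_const_mul, integral_add hG hg.neg_part] at hneg
  constructor <;> linarith

theorem integral_abs_eq_integral_abs_toReal_rnDeriv_mul {Q : Measure Ω}
    [Q.HaveLebesgueDecomposition P] [SigmaFinite Q] (hQP : Q ≪ P) (f : Ω → ℝ) :
    ∫ ω, |f ω| ∂Q = ∫ ω, |(Q.rnDeriv P ω).toReal * f ω| ∂P := by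
  rw [← integral_toReal_rnDeriv_mul hQP]
  simp only [abs_mul, abs_of_nonneg ENNReal.toReal_nonneg]

theorem integrable_comp_and_integral_abs_le {U : ℝ → ℝ} {Z v f : Ω → ℝ} {a x₀ c : ℝ}
    (hU : Continuous U) (ha : 1 ≤ a) (hx₀ : x₀ ≤ 0)
    (hscale : ∀ u ≤ x₀, U (a * u) ≤ 2 * a * U u) (hZ₀ : ∀ ω, 0 ≤ Z ω) (hZ : Integrable Z P)
    (hv : Integrable v P) (hfen : ∀ᵐ ω ∂P, ∀ x, U x - x * Z ω ≤ v ω) (hf : Measurable f)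
    (hφ : Integrable (fun ω => Z ω * f ω) P) (hφ₀ : ∫ ω, Z ω * f ω ∂P ≤ 0)
    (hneg : Integrable (fun ω => max (-U (f ω)) 0) P)
    (hlb : ∫⁻ ω, ENNReal.ofReal (-U (f ω)) ∂P
      ≤ ∫⁻ ω, ENNReal.ofReal (U (f ω)) ∂P + ENNReal.ofReal c) :
    Integrable (fun ω => U (f ω)) P ∧
      ∫ ω, |Z ω * f ω| ∂P ≤ 2 * (∫ ω, |v ω| ∂P
        + ∫ ω, 2 * a * |v ω| + a * -x₀ * Z ω ∂P + max c 0) ∧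
      ∫ ω, |U (f ω)| ∂P ≤ 4 * ∫ ω, |v ω| ∂P
        + 2 * ∫ ω, 2 * a * |v ω| + a * -x₀ * Z ω ∂P + 3 * max c 0 := by
  have h₁ : ∀ᵐ ω ∂P, max (U (f ω)) 0 ≤ |v ω| + max (Z ω * f ω) 0 := by
    filter_upwards [hfen] with ω hω using max_zero_le_abs_add_max_mul (hω (f ω))
  have h₂ : ∀ᵐ ω ∂P, 2 * max (-(Z ω * f ω)) 0
      ≤ 2 * a * |v ω| + a * -x₀ * Z ω + max (-U (f ω)) 0 := by
    filter_upwards [hfen] with ω hω using two_mul_max_neg_mul_le ha hx₀ hscale (hZ₀ ω) hω (f ω)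
  have hg : Integrable (fun ω => U (f ω)) P :=
    Integrable.of_max_zero_le (hU.measurable.comp hf).aestronglyMeasurable hneg
      (hv.abs.add hφ.pos_part) h₁
  exact ⟨hg, integral_abs_le_of_max_zero_le hφ hφ₀ hg
    (neg_max_le_integral_of_lintegral_le hg hlb) hv.abs
    ((hv.abs.const_mul _).add (hZ.const_mul _)) h₁ h₂⟩

end Integration

theorem stmt_0_general {Ω : Type*} [MeasurableSpace Ω]
    (P Q : Measure Ω) [IsProbabilityMeasure P]
    [IsProbabilityMeasure Q]
    (hQP : Q ≪ P)
    (U V : ℝ → ℝ)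
    (hUdiff : Differentiable ℝ U)
    (hUconc : StrictConcaveOn ℝ Set.univ U)
    (hInada1 : Tendsto (deriv U) atBot atTop)
    (hInada2 : Tendsto (deriv U) atTop (nhds 0))
    (hRAE1 : 1 < liminf (fun x => ((x * deriv U x / U x : ℝ) : EReal)) atBot)
    (hV : ∀ y : ℝ, 0 < y → V y = ⨆ x : ℝ, (U x - x * y))
    (hV0 : BddAbove (Set.range U) → V 0 = sSup (Set.range U))
    (hpos : ¬ BddAbove (Set.range U) → ∀ᵐ ω ∂P, 0 < Q.rnDeriv P ω)
    (hent : Integrable (fun ω => V ((Q.rnDeriv P ω).toReal)) P)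
    (k : ℕ → Ω → ℝ) (hkmeas : ∀ n, Measurable (k n))
    (hkQ : ∀ n, Integrable (k n) Q)
    (hkmean : ∀ n, ∫ ω, k n ω ∂Q ≤ 0)
    (hUneg : ∀ n, Integrable (fun ω => max (-(U (k n ω))) 0) P)
    (hlb : ∃ c : ℝ, ∀ n,
      ∫⁻ ω, ENNReal.ofReal (-(U (k n ω))) ∂P
        ≤ ∫⁻ ω, ENNReal.ofReal (U (k n ω)) ∂P + ENNReal.ofReal c) :
    (∃ C : ℝ, ∀ n, ∫ ω, |k n ω| ∂Q ≤ C) ∧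
    (∀ n, Integrable (fun ω => U (k n ω)) P) ∧
    (∃ C : ℝ, ∀ n, ∫ ω, |U (k n ω)| ∂P ≤ C) := by
  obtain ⟨c, hc⟩ := hlb
  obtain ⟨a, x₀, ha, hx₀, hscale⟩ :=
    exists_le_two_mul_mul_of_one_lt_liminf hUdiff hUconc.concaveOn hInada1 hRAE1
  have hfen := ae_sub_mul_rnDeriv_le_conjugate
    (fun _ hy => hUconc.concaveOn.bddAbove_range_sub_mul hUdiff hInada1 hInada2 hy) hV hV0 hpos
  have hbound n := integrable_comp_and_integral_abs_le hUdiff.continuous ha hx₀ hscale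
    (fun _ => ENNReal.toReal_nonneg) Measure.integrable_toReal_rnDeriv hent hfen (hkmeas n)
    ((integrable_toReal_rnDeriv_mul_iff hQP).2 (hkQ n))
    ((integral_toReal_rnDeriv_mul hQP).trans_le (hkmean n)) (hUneg n) (hc n)
  exact ⟨⟨_, fun n => (integral_abs_eq_integral_abs_toReal_rnDeriv_mul hQP (k n)).trans_le
    (hbound n).2.1⟩, fun n => (hbound n).1, ⟨_, fun n => (hbound n).2.2⟩⟩

/-- Lemma (Biagini–Černý type, parts (a) and (b)): under the Inada conditions and
reasonable asymptotic elasticity, a sequence `kⁿ` with `E_Q[kⁿ] ≤ 0` and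
`E_P[U(kⁿ)]` bounded below is bounded in `L¹(Q)`, and `(U(kⁿ))` is bounded in `L¹(P)`. -/
theorem stmt_0 {Ω : Type*} [MeasurableSpace Ω]
    (μ P Q : Measure Ω) [IsProbabilityMeasure μ] [IsProbabilityMeasure P]
    [IsProbabilityMeasure Q]
    (hPμ : P ≪ μ) (hQP : Q ≪ P)
    (U V : ℝ → ℝ)
    (hUdiff : Differentiable ℝ U)
    (hUconc : StrictConcaveOn ℝ Set.univ U)
    (hInada1 : Tendsto (deriv U) atBot atTop)
    (hInada2 : Tendsto (deriv U) atTop (nhds 0))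
    (hRAE1 : 1 < liminf (fun x => ((x * deriv U x / U x : ℝ) : EReal)) atBot)
    (hRAE2 : limsup (fun x => ((x * deriv U x / U x : ℝ) : EReal)) atTop < 1)
    (hV : ∀ y : ℝ, 0 < y → V y = ⨆ x : ℝ, (U x - x * y))
    (hV0 : BddAbove (Set.range U) → V 0 = sSup (Set.range U))
    (hpos : ¬ BddAbove (Set.range U) → ∀ᵐ ω ∂P, 0 < Q.rnDeriv P ω)
    (hent : Integrable (fun ω => V ((Q.rnDeriv P ω).toReal)) P)
    (k : ℕ → Ω → ℝ) (hkmeas : ∀ n, Measurable (k n))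
    (hkQ : ∀ n, Integrable (k n) Q)
    (hkmean : ∀ n, ∫ ω, k n ω ∂Q ≤ 0)
    (hUneg : ∀ n, Integrable (fun ω => max (-(U (k n ω))) 0) P)
    (hlb : ∃ c : ℝ, ∀ n,
      ∫⁻ ω, ENNReal.ofReal (-(U (k n ω))) ∂P
        ≤ ∫⁻ ω, ENNReal.ofReal (U (k n ω)) ∂P + ENNReal.ofReal c) :
    (∃ C : ℝ, ∀ n, ∫ ω, |k n ω| ∂Q ≤ C) ∧
    (∀ n, Integrable (fun ω => U (k n ω)) P) ∧
    (∃ C : ℝ, ∀ n, ∫ ω, |U (k n ω)| ∂P ≤ C) :=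
  stmt_0_general P Q hQP U V hUdiff hUconc hInada1 hInada2 hRAE1 hV hV0 hpos hent k hkmeas hkQ
    hkmean hUneg hlb
end

section
/- Let ℙ be a reference probability measure, and let Q, Q′, P, P′ be probability measures absolutely continuous with respect to ℙ. Let V : [0,∞) → (−∞,∞] be convex, bounded below, finite on (0,∞). Then for all α, γ ∈ (0,1): V(αQ + (1−α)Q′ | γP + (1−γ)P′) ≤ γ · V((α/γ)Q | P) + (1−γ) · V(((1−α)/(1−γ))Q′ | P′). -/
open MeasureTheory Filter Set

/- The generalized entropy `V(ν|P) ∈ (−∞,∞]` of a measure `ν` relative to a probability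
measure `P`, associated with a convex function `V` bounded from below:
`V(ν|P) = ∫ V(dν/dP) dP` if `ν ≪ P`, and `+∞` otherwise. (Since `V` is bounded below the
negative part is integrable, so the difference of the two lower integrals is well defined
in `EReal`.) -/
open Classical in
noncomputable def genEntropy {Ω : Type*} [MeasurableSpace Ω] (V : ℝ → ℝ)
    (ν P : Measure Ω) : EReal :=
  if ν ≪ P then
    (∫⁻ ω, ENNReal.ofReal (V ((ν.rnDeriv P ω).toReal)) ∂P).toEReal
      - (∫⁻ ω, ENNReal.ofReal (-V ((ν.rnDeriv P ω).toReal)) ∂P).toEReal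
  else ⊤

/-!
Take `R = γP + (1−γ)P'` itself as reference measure. Then the weights `s = γ dP/dR` and
`t = (1−γ) dP'/dR` satisfy `s + t = 1` `R`-a.e., and
`d(αQ + (1−α)Q')/dR = s · d((α/γ)Q)/dP + t · d(((1−α)/(1−γ))Q')/dP'`.
Convexity of `V` applied pointwise with the weights `s, t`, integrated against `R`, is the claim
(joint convexity of `(ν, P) ↦ V(ν|P)`). Subtracting a lower bound of `V` first makes every
integrand nonnegative, so all integrals are lower Lebesgue integrals in `ℝ≥0∞`.
-/

open scoped ENNReal NNReal

-- `V` is continuous on `(0, ∞)` but may jump at `0`.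
lemma ConvexOn.measurable_comp_toReal {V : ℝ → ℝ} (hV : ConvexOn ℝ (Ici 0) V) :
    Measurable fun y : ℝ≥0∞ => V y.toReal := by
  classical
  have h : Measurable ((Ioi (0 : ℝ)).piecewise V fun _ => V 0) :=
    ContinuousOn.measurable_piecewise (by simpa using hV.continuousOn_interior)
      continuousOn_const measurableSet_Ioi
  convert h.comp ENNReal.measurable_toReal using 1
  ext y
  by_cases hy : 0 < y.toReal
  · simp [Set.piecewise, hy]
  · simp [Set.piecewise, le_antisymm (not_lt.1 hy) ENNReal.toReal_nonneg]

lemma ConvexOn.ofReal_map_add_le {W : ℝ → ℝ} (hW : ConvexOn ℝ (Ici 0) W)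
    {s t x y : ℝ≥0∞} (hst : s + t = 1) (hx : s * x ≠ ∞) (hy : t * y ≠ ∞) :
    ENNReal.ofReal (W (s * x + t * y).toReal)
      ≤ s * ENNReal.ofReal (W x.toReal) + t * ENNReal.ofReal (W y.toReal) := by
  have hs : s ≠ ∞ := ne_top_of_le_ne_top ENNReal.one_ne_top (hst ▸ le_self_add)
  have ht : t ≠ ∞ := ne_top_of_le_ne_top ENNReal.one_ne_top (hst ▸ le_add_self)
  have hst' : s.toReal + t.toReal = 1 := by
    rw [← ENNReal.toReal_add hs ht, hst, ENNReal.toReal_one]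
  have hconv := hW.2 (mem_Ici.2 (ENNReal.toReal_nonneg (a := x)))
    (mem_Ici.2 (ENNReal.toReal_nonneg (a := y))) ENNReal.toReal_nonneg ENNReal.toReal_nonneg hst'
  rw [ENNReal.toReal_add hx hy, ENNReal.toReal_mul, ENNReal.toReal_mul]
  calc ENNReal.ofReal (W (s.toReal * x.toReal + t.toReal * y.toReal))
      ≤ ENNReal.ofReal (s.toReal * W x.toReal + t.toReal * W y.toReal) :=
        ENNReal.ofReal_le_ofReal hconv
    _ ≤ ENNReal.ofReal (s.toReal * W x.toReal) + ENNReal.ofReal (t.toReal * W y.toReal) :=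
        ENNReal.ofReal_add_le
    _ = s * ENNReal.ofReal (W x.toReal) + t * ENNReal.ofReal (W y.toReal) := by
        rw [ENNReal.ofReal_mul ENNReal.toReal_nonneg, ENNReal.ofReal_mul ENNReal.toReal_nonneg,
          ENNReal.ofReal_toReal hs, ENNReal.ofReal_toReal ht]

lemma EReal.coe_ennreal_sub_eq_of_add_eq {x y u v : ℝ≥0∞} (hy : y ≠ ∞) (hv : v ≠ ∞)
    (h : x + v = u + y) : (x : EReal) - y = u - v := by
  lift y to ℝ≥0 using hy
  lift v to ℝ≥0 using hv
  rcases eq_or_ne x ∞ with rfl | hx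
  · obtain rfl : u = ∞ := by simpa [eq_comm] using h
    simp
  have hu : u ≠ ∞ := by
    rintro rfl
    simp [hx] at h
  lift x to ℝ≥0 using hx
  lift u to ℝ≥0 using hu
  have h' : (x : ℝ) + v = u + y := by exact_mod_cast h
  simp only [EReal.coe_nnreal_eq_coe_real, ← EReal.coe_sub]
  exact_mod_cast (by linarith : (x : ℝ) - y = u - v)

lemma EReal.coe_mul_coe_ennreal_add_coe {c : ℝ} (hc : 0 ≤ c) (x : ℝ≥0∞) (b : ℝ) :
    (c : EReal) * ((x : EReal) + b) = ((ENNReal.ofReal c * x : ℝ≥0∞) : EReal) + (c * b : ℝ) := by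
  rw [EReal.left_distrib_of_nonneg_of_ne_top (EReal.coe_nonneg.2 hc) (EReal.coe_ne_top c),
    EReal.coe_ennreal_mul, EReal.coe_ennreal_ofReal, max_eq_left hc, EReal.coe_mul]

namespace MeasureTheory

variable {Ω : Type*} [MeasurableSpace Ω]

lemma Measure.rnDeriv_smul_add_smul (μ₁ μ₂ ρ : Measure Ω) [IsFiniteMeasure μ₁]
    [IsFiniteMeasure μ₂] [SigmaFinite ρ] {a b : ℝ≥0∞} (ha : a ≠ ∞) (hb : b ≠ ∞) :
    (a • μ₁ + b • μ₂).rnDeriv ρ =ᵐ[ρ] fun ω => a * μ₁.rnDeriv ρ ω + b * μ₂.rnDeriv ρ ω := by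
  have := μ₁.smul_finite ha
  have := μ₂.smul_finite hb
  filter_upwards [Measure.rnDeriv_add (a • μ₁) (b • μ₂) ρ,
    Measure.rnDeriv_smul_left_of_ne_top μ₁ ρ ha, Measure.rnDeriv_smul_left_of_ne_top μ₂ ρ hb]
    with ω h h₁ h₂
  simp [h, h₁, h₂]

lemma isProbabilityMeasure_ofReal_smul_add (P P' : Measure Ω) [IsProbabilityMeasure P]
    [IsProbabilityMeasure P'] {γ : ℝ} (hγ₀ : 0 ≤ γ) (hγ₁ : γ ≤ 1) :
    IsProbabilityMeasure (ENNReal.ofReal γ • P + ENNReal.ofReal (1 - γ) • P') :=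
  ⟨by simp [← ENNReal.ofReal_add hγ₀ (sub_nonneg.2 hγ₁)]⟩

lemma lintegral_ofReal_sub_lintegral_ofReal_neg {P : Measure Ω} [IsProbabilityMeasure P]
    {f : Ω → ℝ} (hf : Measurable f) {b : ℝ} (hb₀ : b ≤ 0) (hb : ∀ ω, b ≤ f ω) :
    ((∫⁻ ω, ENNReal.ofReal (f ω) ∂P : ℝ≥0∞) : EReal) - (∫⁻ ω, ENNReal.ofReal (-f ω) ∂P : ℝ≥0∞)
      = (∫⁻ ω, ENNReal.ofReal (f ω - b) ∂P : ℝ≥0∞) + b := by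
  have hneg : ∫⁻ ω, ENNReal.ofReal (-f ω) ∂P ≠ ∞ := by
    refine ne_top_of_le_ne_top (ENNReal.ofReal_ne_top (r := -b)) ?_
    calc ∫⁻ ω, ENNReal.ofReal (-f ω) ∂P ≤ ∫⁻ _, ENNReal.ofReal (-b) ∂P :=
          lintegral_mono fun ω => ENNReal.ofReal_le_ofReal (neg_le_neg (hb ω))
      _ = ENNReal.ofReal (-b) := by simp
  have hsplit : ∀ ω, ENNReal.ofReal (f ω) + ENNReal.ofReal (-b)
      = ENNReal.ofReal (f ω - b) + ENNReal.ofReal (-f ω) := by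
    intro ω
    rcases le_or_gt 0 (f ω) with h | h
    · rw [ENNReal.ofReal_of_nonpos (neg_nonpos.2 h), add_zero, sub_eq_add_neg,
        ENNReal.ofReal_add h (neg_nonneg.2 hb₀)]
    · rw [ENNReal.ofReal_of_nonpos h.le, zero_add,
        ← ENNReal.ofReal_add (by linarith [hb ω]) (by linarith)]
      ring_nf
  have hsum : ∫⁻ ω, ENNReal.ofReal (f ω) ∂P + ENNReal.ofReal (-b)
      = ∫⁻ ω, ENNReal.ofReal (f ω - b) ∂P + ∫⁻ ω, ENNReal.ofReal (-f ω) ∂P := by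
    rw [← lintegral_add_left (by fun_prop), ← lintegral_congr hsplit,
      lintegral_add_right _ measurable_const, lintegral_const, measure_univ, mul_one]
  rw [EReal.coe_ennreal_sub_eq_of_add_eq hneg ENNReal.ofReal_ne_top hsum,
    EReal.coe_ennreal_ofReal, max_eq_left (neg_nonneg.2 hb₀), EReal.coe_neg, sub_eq_add_neg,
    neg_neg]

open Classical in
/-- The `ℝ≥0∞`-valued counterpart of `genEntropy`; `ENNReal.ofReal` truncates, so it only agrees
with `genEntropy` for `W ≥ 0`. -/
noncomputable def lgenEntropy (W : ℝ → ℝ) (ν P : Measure Ω) : ℝ≥0∞ :=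
  if ν ≪ P then ∫⁻ ω, ENNReal.ofReal (W (ν.rnDeriv P ω).toReal) ∂P else ∞

lemma genEntropy_eq_lgenEntropy_add {V : ℝ → ℝ} (hV : Measurable fun y : ℝ≥0∞ => V y.toReal)
    {b : ℝ} (hb₀ : b ≤ 0) (hb : ∀ y, 0 ≤ y → b ≤ V y) (ν P : Measure Ω)
    [IsProbabilityMeasure P] :
    genEntropy V ν P = (lgenEntropy (fun y => V y - b) ν P : EReal) + b := by
  by_cases hνP : ν ≪ P
  · rw [genEntropy, lgenEntropy, if_pos hνP, if_pos hνP]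
    exact lintegral_ofReal_sub_lintegral_ofReal_neg (hV.comp (Measure.measurable_rnDeriv ν P))
      hb₀ fun ω => hb _ ENNReal.toReal_nonneg
  · simp [genEntropy, lgenEntropy, hνP]

theorem lgenEntropy_smul_add_smul_le {W : ℝ → ℝ} (hW : ConvexOn ℝ (Ici 0) W)
    (ν₁ ν₂ P₁ P₂ : Measure Ω) [IsFiniteMeasure ν₁] [IsFiniteMeasure ν₂]
    [IsFiniteMeasure P₁] [IsFiniteMeasure P₂] {a b : ℝ≥0∞}
    (ha₀ : a ≠ 0) (hb₀ : b ≠ 0) (ha : a ≠ ∞) (hb : b ≠ ∞) :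
    lgenEntropy W (a • ν₁ + b • ν₂) (a • P₁ + b • P₂)
      ≤ a * lgenEntropy W ν₁ P₁ + b * lgenEntropy W ν₂ P₂ := by
  by_cases h₁ : ν₁ ≪ P₁
  swap
  · simp [lgenEntropy, h₁, ENNReal.mul_top ha₀]
  by_cases h₂ : ν₂ ≪ P₂
  swap
  · simp [lgenEntropy, h₂, ENNReal.mul_top hb₀]
  set R := a • P₁ + b • P₂
  have := P₁.smul_finite ha
  have := P₂.smul_finite hb
  have hP₁R : P₁ ≪ R := (Measure.absolutelyContinuous_smul ha₀).add_right _
  have hP₂R : P₂ ≪ R := (Measure.absolutelyContinuous_smul hb₀).add_right' _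
  have hνR : a • ν₁ + b • ν₂ ≪ R := (h₁.smul a).add (h₂.smul b)
  have hWm := hW.measurable_comp_toReal
  have hF₁ : Measurable fun ω => ENNReal.ofReal (W (ν₁.rnDeriv P₁ ω).toReal) :=
    ENNReal.measurable_ofReal.comp (hWm.comp (Measure.measurable_rnDeriv _ _))
  have hF₂ : Measurable fun ω => ENNReal.ofReal (W (ν₂.rnDeriv P₂ ω).toReal) :=
    ENNReal.measurable_ofReal.comp (hWm.comp (Measure.measurable_rnDeriv _ _))
  rw [lgenEntropy, if_pos hνR, lgenEntropy, if_pos h₁, lgenEntropy, if_pos h₂,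
    ← lintegral_rnDeriv_mul hP₁R hF₁.aemeasurable, ← lintegral_rnDeriv_mul hP₂R hF₂.aemeasurable,
    ← lintegral_const_mul' _ _ ha, ← lintegral_const_mul' _ _ hb,
    ← lintegral_add_left (by fun_prop)]
  refine lintegral_mono_ae ?_
  filter_upwards [Measure.rnDeriv_self R, Measure.rnDeriv_smul_add_smul P₁ P₂ R ha hb,
    Measure.rnDeriv_smul_add_smul ν₁ ν₂ R ha hb, Measure.rnDeriv_mul_rnDeriv (κ := R) h₁,
    Measure.rnDeriv_mul_rnDeriv (κ := R) h₂, Measure.rnDeriv_ne_top ν₁ R,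
    Measure.rnDeriv_ne_top ν₂ R]
    with ω hRR hR hν e₁ e₂ f₁ f₂
  have hx : a * P₁.rnDeriv R ω * ν₁.rnDeriv P₁ ω = a * ν₁.rnDeriv R ω := by
    rw [← e₁, Pi.mul_apply, mul_assoc, mul_comm (P₁.rnDeriv R ω)]
  have hy : b * P₂.rnDeriv R ω * ν₂.rnDeriv P₂ ω = b * ν₂.rnDeriv R ω := by
    rw [← e₂, Pi.mul_apply, mul_assoc, mul_comm (P₂.rnDeriv R ω)]
  rw [hν, ← hx, ← hy]
  refine (hW.ofReal_map_add_le (hR.symm.trans hRR) ?_ ?_).trans_eq (by ring)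
  · exact hx ▸ ENNReal.mul_ne_top ha f₁
  · exact hy ▸ ENNReal.mul_ne_top hb f₂

end MeasureTheory

theorem stmt_3_general {Ω : Type*} [MeasurableSpace Ω]
    (P P' Q Q' : Measure Ω)
    [IsProbabilityMeasure P] [IsProbabilityMeasure P']
    [IsProbabilityMeasure Q] [IsProbabilityMeasure Q']
    (V : ℝ → ℝ) (hVconv : ConvexOn ℝ (Set.Ici 0) V)
    (hVbdd : ∃ b : ℝ, ∀ y : ℝ, 0 ≤ y → b ≤ V y) :
    ∀ α γ : ℝ, α ∈ Set.Ioo (0:ℝ) 1 → γ ∈ Set.Ioo (0:ℝ) 1 →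
      genEntropy V (ENNReal.ofReal α • Q + ENNReal.ofReal (1 - α) • Q')
          (ENNReal.ofReal γ • P + ENNReal.ofReal (1 - γ) • P')
        ≤ (γ : EReal) * genEntropy V (ENNReal.ofReal (α / γ) • Q) P
          + ((1 - γ : ℝ) : EReal) * genEntropy V (ENNReal.ofReal ((1 - α) / (1 - γ)) • Q') P' := by
  rintro α γ - ⟨hγ₀, hγ₁⟩
  have hγ₁' : 0 < 1 - γ := sub_pos.2 hγ₁
  have := isProbabilityMeasure_ofReal_smul_add P P' hγ₀.le hγ₁.le
  obtain ⟨b, hb⟩ := hVbdd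
  have hb' : ∀ y, 0 ≤ y → min b 0 ≤ V y := fun y hy => (min_le_left _ _).trans (hb y hy)
  simp only [genEntropy_eq_lgenEntropy_add hVconv.measurable_comp_toReal (min_le_right b 0) hb']
  have hW : ConvexOn ℝ (Ici 0) fun y => V y - min b 0 :=
    hVconv.sub (concaveOn_const _ (convex_Ici 0))
  have := Q.smul_finite (ENNReal.ofReal_ne_top (r := α / γ))
  have := Q'.smul_finite (ENNReal.ofReal_ne_top (r := (1 - α) / (1 - γ)))
  have key := lgenEntropy_smul_add_smul_le hW (ENNReal.ofReal (α / γ) • Q)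
    (ENNReal.ofReal ((1 - α) / (1 - γ)) • Q') P P' (ENNReal.ofReal_pos.2 hγ₀).ne'
    (ENNReal.ofReal_pos.2 hγ₁').ne' ENNReal.ofReal_ne_top ENNReal.ofReal_ne_top
  rw [smul_smul, smul_smul, ← ENNReal.ofReal_mul hγ₀.le, ← ENNReal.ofReal_mul hγ₁'.le,
    mul_div_cancel₀ _ hγ₀.ne', mul_div_cancel₀ _ hγ₁'.ne'] at key
  rw [EReal.coe_mul_coe_ennreal_add_coe hγ₀.le, EReal.coe_mul_coe_ennreal_add_coe hγ₁'.le,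
    add_add_add_comm, ← EReal.coe_ennreal_add, ← EReal.coe_add, ← add_mul, add_sub_cancel,
    one_mul]
  exact add_le_add_left (EReal.coe_ennreal_le_coe_ennreal_iff.2 key) _

/-- Lemma 5.4 (`ConseqRAE`), main inequality: for probability measures `Q, Q', P, P' ≪ μ`
and a convex, bounded-below `V` (finite on `(0,∞)`),
`V(αQ + (1−α)Q' | γP + (1−γ)P') ≤ γ V((α/γ)Q|P) + (1−γ) V(((1−α)/(1−γ))Q'|P')`. -/
theorem stmt_3 {Ω : Type*} [MeasurableSpace Ω]
    (μ P P' Q Q' : Measure Ω) [IsProbabilityMeasure μ]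
    [IsProbabilityMeasure P] [IsProbabilityMeasure P']
    [IsProbabilityMeasure Q] [IsProbabilityMeasure Q']
    (hP : P ≪ μ) (hP' : P' ≪ μ) (hQ : Q ≪ μ) (hQ' : Q' ≪ μ)
    (V : ℝ → ℝ) (hVconv : ConvexOn ℝ (Set.Ici 0) V)
    (hVbdd : ∃ b : ℝ, ∀ y : ℝ, 0 ≤ y → b ≤ V y) :
    ∀ α γ : ℝ, α ∈ Set.Ioo (0:ℝ) 1 → γ ∈ Set.Ioo (0:ℝ) 1 →
      genEntropy V (ENNReal.ofReal α • Q + ENNReal.ofReal (1 - α) • Q')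
          (ENNReal.ofReal γ • P + ENNReal.ofReal (1 - γ) • P')
        ≤ (γ : EReal) * genEntropy V (ENNReal.ofReal (α / γ) • Q) P
          + ((1 - γ : ℝ) : EReal) * genEntropy V (ENNReal.ofReal ((1 - α) / (1 - γ)) • Q') P' :=
  stmt_3_general P P' Q Q' V hVconv hVbdd
end

section
/- Let ℙ be a reference probability measure and 𝒫 a convex set of probability measures absolutely continuous with respect to ℙ, and set 𝒫ᵉ := {P ∈ 𝒫 : P ∼ ℙ (mutually absolutely continuous)}. Assume 𝒫ᵉ ≠ ∅. Then a random variable X satisfies X ∈ L¹(P) for every P ∈ 𝒫 if and only if X ∈ L¹(P) for every P ∈ 𝒫ᵉ; that is, ⋂_{P∈𝒫} L¹(P) = ⋂_{P∈𝒫ᵉ} L¹(P). -/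
open MeasureTheory

theorem stmt_6_general {Ω : Type*} [MeasurableSpace Ω]
    (μ : Measure Ω)
    (Pset : Set (Measure Ω))
    (hconv : ∀ P ∈ Pset, ∀ P' ∈ Pset, ∀ t : ℝ, 0 ≤ t → t ≤ 1 →
      (ENNReal.ofReal t • P + ENNReal.ofReal (1 - t) • P') ∈ Pset)
    (hne : ∃ P ∈ Pset, μ ≪ P)
    (X : Ω → ℝ) :
    (∀ P ∈ Pset, Integrable X P) ↔ (∀ P ∈ {P ∈ Pset | μ ≪ P}, Integrable X P) := by
  refine ⟨fun h P hP => h P hP.1, fun h P hP => ?_⟩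
  obtain ⟨Q, hQ, hμQ⟩ := hne
  -- `(P + Q)/2` is equivalent to `μ` and dominates `P / 2`.
  set R := ENNReal.ofReal (1 / 2) • P + ENNReal.ofReal (1 - 1 / 2) • Q
  have hR : R ∈ Pset := hconv P hP Q hQ (1 / 2) (by norm_num) (by norm_num)
  have hμR : μ ≪ R := (hμQ.smul_right (by norm_num)).add_right' _
  have hXR : Integrable X R := h R ⟨hR, hμR⟩
  have half_ne_zero : ENNReal.ofReal (1 / 2) ≠ 0 := by norm_num
  exact (integrable_smul_measure half_ne_zero ENNReal.ofReal_ne_top).1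
    (integrable_add_measure.1 hXR).1

/-- For a convex set `Pset` of probability measures absolutely continuous w.r.t. a reference
probability `μ`, with `Psetᵉ = {P ∈ Pset : P ∼ μ}` nonempty: a random variable `X` is in
`L¹(P)` for every `P ∈ Pset` iff it is in `L¹(P)` for every `P ∈ Psetᵉ`. -/
theorem stmt_6 {Ω : Type*} [MeasurableSpace Ω]
    (μ : Measure Ω) [IsProbabilityMeasure μ]
    (Pset : Set (Measure Ω))
    (hprob : ∀ P ∈ Pset, IsProbabilityMeasure P)
    (hac : ∀ P ∈ Pset, P ≪ μ)
    (hconv : ∀ P ∈ Pset, ∀ P' ∈ Pset, ∀ t : ℝ, 0 ≤ t → t ≤ 1 →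
      (ENNReal.ofReal t • P + ENNReal.ofReal (1 - t) • P') ∈ Pset)
    (hne : ∃ P ∈ Pset, μ ≪ P)
    (X : Ω → ℝ) :
    (∀ P ∈ Pset, Integrable X P) ↔ (∀ P ∈ {P ∈ Pset | μ ≪ P}, Integrable X P) :=
  stmt_6_general μ Pset hconv hne X
end

section
/- Let (Ω,ℱ,ℙ) be a probability space and 𝒢 ⊆ ℱ a sub-σ-algebra. Let Z, Ẑ, D, D̂ be strictly positive integrable random variables with E[Z] = E[Ẑ] = E[D] = E[D̂] = 1, and write Z_𝒢 := E[Z|𝒢], Ẑ_𝒢 := E[Ẑ|𝒢], D_𝒢 := E[D|𝒢], D̂_𝒢 := E[D̂|𝒢] (all strictly positive a.s.). For α ∈ [0,1] set Z^α := α·Z/Z_𝒢 + (1−α)·Ẑ/Ẑ_𝒢 and D^α := α·D/D_𝒢 + (1−α)·D̂/D̂_𝒢. Let V : (0,∞) → ℝ be convex, bounded below, and satisfy the growth condition: for every a ≥ 1 there exist C_a, C_a′ > 0 such that V(λy) ≤ C_a V(y) + C_a′(y+1) for all λ ∈ [a⁻¹, a], y > 0. Assume D·V(Z/D) ∈ L¹(ℙ)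 and D̂·V(Ẑ/D̂) ∈ L¹(ℙ). Then the random variable Φ^α := D̂_𝒢 · D^α · V(Ẑ_𝒢 Z^α / (D̂_𝒢 D^α)) is 𝒢-locally integrable: the sets A_n := {Ẑ_𝒢, Z_𝒢, D̂_𝒢, D_𝒢 ∈ (n⁻¹, n)} ∈ 𝒢 satisfy ℙ(A_n) ↑ 1 and 1_{A_n}·Φ^α ∈ L¹(ℙ) for every n. -/
open MeasureTheory Filter Set

/- The conditional convex combination `Z^α = α·Z/E[Z|𝒢] + (1−α)·Ẑ/E[Ẑ|𝒢]`. -/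
noncomputable def condComb {Ω : Type*} {mΩ : MeasurableSpace Ω} (μ : Measure Ω)
    (m : MeasurableSpace Ω) (Z Zh : Ω → ℝ) (a : ℝ) (ω : Ω) : ℝ :=
  a * (Z ω / (μ[Z|m]) ω) + (1 - a) * (Zh ω / (μ[Zh|m]) ω)

/- The random variable `Φ^α = D̂_𝒢 · D^α · V(Ẑ_𝒢 Z^α / (D̂_𝒢 D^α))`. -/
noncomputable def PhiRV {Ω : Type*} {mΩ : MeasurableSpace Ω} (μ : Measure Ω)
    (m : MeasurableSpace Ω) (V : ℝ → ℝ) (Z Zh D Dh : Ω → ℝ) (a : ℝ) (ω : Ω) : ℝ :=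
  (μ[Dh|m]) ω * condComb μ m D Dh a ω
    * V ((μ[Zh|m]) ω * condComb μ m Z Zh a ω
        / ((μ[Dh|m]) ω * condComb μ m D Dh a ω))

/- The localizing sets `A_n = {Ẑ_𝒢, Z_𝒢, D̂_𝒢, D_𝒢 ∈ (n⁻¹, n)}`. -/
noncomputable def locSet {Ω : Type*} {mΩ : MeasurableSpace Ω} (μ : Measure Ω)
    (m : MeasurableSpace Ω) (Z Zh D Dh : Ω → ℝ) (n : ℕ) : Set Ω :=
  {ω | (μ[Zh|m]) ω ∈ Set.Ioo ((n : ℝ)⁻¹) (n : ℝ) ∧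
       (μ[Z|m]) ω ∈ Set.Ioo ((n : ℝ)⁻¹) (n : ℝ) ∧
       (μ[Dh|m]) ω ∈ Set.Ioo ((n : ℝ)⁻¹) (n : ℝ) ∧
       (μ[D|m]) ω ∈ Set.Ioo ((n : ℝ)⁻¹) (n : ℝ)}


lemma comb_pos {a u v : ℝ} (ha0 : 0 ≤ a) (ha1 : a ≤ 1) (hu : 0 < u) (hv : 0 < v) :
    0 < a * u + (1 - a) * v := by
  rcases eq_or_lt_of_le ha1 with h | h
  · subst h; simpa using hu
  · have h1 : 0 ≤ a * u := mul_nonneg ha0 hu.le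
    have h2 : 0 < (1 - a) * v := mul_pos (by linarith) hv
    linarith

lemma div_le_n_mul {n zg z : ℝ} (hn : 1 ≤ n) (hzg : n⁻¹ < zg) (hz : 0 < z) :
    z / zg ≤ n * z := by
  have hn0 : 0 < n := lt_of_lt_of_le one_pos hn
  have hzg0 : 0 < zg := lt_trans (by positivity) hzg
  rw [div_le_iff₀ hzg0]
  have h1 : 1 ≤ n * zg := by
    have h := mul_lt_mul_of_pos_left hzg hn0
    rw [mul_inv_cancel₀ (ne_of_gt hn0)] at h
    linarith
  nlinarith

lemma ratio_mem_Icc {n x1 x2 : ℝ} (hn : 1 ≤ n) (hx1 : x1 ∈ Set.Ioo n⁻¹ n)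
    (hx2 : x2 ∈ Set.Ioo n⁻¹ n) : x1 / x2 ∈ Set.Icc ((n^2)⁻¹) (n^2) := by
  have hn0 : 0 < n := lt_of_lt_of_le one_pos hn
  have hinv : 0 < n⁻¹ := by positivity
  have hx20 : 0 < x2 := lt_trans hinv hx2.1
  constructor
  · rw [le_div_iff₀ hx20]
    have h1 : (n^2)⁻¹ * x2 < (n^2)⁻¹ * n :=
      mul_lt_mul_of_pos_left hx2.2 (by positivity)
    have h2 : (n^2)⁻¹ * n = n⁻¹ := by rw [sq]; field_simp
    linarith [hx1.1]
  · rw [div_le_iff₀ hx20]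
    have h1 : n^2 * n⁻¹ < n^2 * x2 :=
      mul_lt_mul_of_pos_left hx2.1 (by positivity)
    have h2 : n^2 * n⁻¹ = n := by rw [sq]; field_simp
    linarith [hx1.2]

set_option maxHeartbeats 1000000 in
lemma key_bound (V : ℝ → ℝ) (hVconv : ConvexOn ℝ (Set.Ioi 0) V)
    {b : ℝ} (hb : ∀ y : ℝ, 0 < y → b ≤ V y)
    {n C C' : ℝ} (hn : 1 ≤ n) (hC : 0 < C) (hC' : 0 < C')
    (hgrow : ∀ l ∈ Set.Icc ((n^2)⁻¹) (n^2), ∀ y : ℝ, 0 < y → V (l * y) ≤ C * V y + C' * (y + 1))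
    {a : ℝ} (ha0 : 0 ≤ a) (ha1 : a ≤ 1)
    {z zh d dh zg zhg dg dhg : ℝ}
    (hz : 0 < z) (hzh : 0 < zh) (hd : 0 < d) (hdh : 0 < dh)
    (hzg : zg ∈ Set.Ioo n⁻¹ n) (hzhg : zhg ∈ Set.Ioo n⁻¹ n)
    (hdg : dg ∈ Set.Ioo n⁻¹ n) (hdhg : dhg ∈ Set.Ioo n⁻¹ n) :
    |dhg * (a * (d / dg) + (1 - a) * (dh / dhg)) *
      V (zhg * (a * (z / zg) + (1 - a) * (zh / zhg)) /
         (dhg * (a * (d / dg) + (1 - a) * (dh / dhg))))| ≤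
    (n^2 * (2*C^2 + 2*C*C' + 2*C' + |b| + 1)) *
      (d * |V (z / d)| + dh * |V (zh / dh)| + (z + zh + d + dh)) := by
  have hn0 : 0 < n := lt_of_lt_of_le one_pos hn
  have hinv : 0 < n⁻¹ := by positivity
  have hzg0 : 0 < zg := lt_trans hinv hzg.1
  have hzhg0 : 0 < zhg := lt_trans hinv hzhg.1
  have hdg0 : 0 < dg := lt_trans hinv hdg.1
  have hdhg0 : 0 < dhg := lt_trans hinv hdhg.1
  set u := z / zg with hu_def
  set v := zh / zhg with hv_def
  set p := d / dg with hp_def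
  set q := dh / dhg with hq_def
  have hu : 0 < u := div_pos hz hzg0
  have hv : 0 < v := div_pos hzh hzhg0
  have hp : 0 < p := div_pos hd hdg0
  have hq : 0 < q := div_pos hdh hdhg0
  set Za := a * u + (1 - a) * v with hZa_def
  set Da := a * p + (1 - a) * q with hDa_def
  have hZa : 0 < Za := comb_pos ha0 ha1 hu hv
  have hDa : 0 < Da := comb_pos ha0 ha1 hp hq
  have hp_ne : p ≠ 0 := ne_of_gt hp
  have hq_ne : q ≠ 0 := ne_of_gt hq
  have hDa_ne' : Da ≠ 0 := ne_of_gt hDa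
  clear_value u v p q Za Da
  -- abbreviations for the entropy terms
  set T1 := d * |V (z / d)| with hT1_def
  set T2 := dh * |V (zh / dh)| with hT2_def
  set T4 := z + zh + d + dh with hT4_def
  have hT1 : 0 ≤ T1 := mul_nonneg hd.le (abs_nonneg _)
  have hT2 : 0 ≤ T2 := mul_nonneg hdh.le (abs_nonneg _)
  have hT4 : 0 < T4 := by rw [hT4_def]; linarith
  clear_value T1 T2 T4
  -- bounds on u, v, p, q
  have hu_le : u ≤ n * z := by rw [hu_def]; exact div_le_n_mul hn hzg.1 hz
  have hv_le : v ≤ n * zh := by rw [hv_def]; exact div_le_n_mul hn hzhg.1 hzh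
  have hp_le : p ≤ n * d := by rw [hp_def]; exact div_le_n_mul hn hdg.1 hd
  have hq_le : q ≤ n * dh := by rw [hq_def]; exact div_le_n_mul hn hdhg.1 hdh
  have hZa_le : Za ≤ n * (z + zh) := by
    have h1 : a * u ≤ a * (n * z) := mul_le_mul_of_nonneg_left hu_le ha0
    have h2 : (1 - a) * v ≤ (1 - a) * (n * zh) :=
      mul_le_mul_of_nonneg_left hv_le (by linarith)
    have h3 : a * (n * z) ≤ n * z := by nlinarith [mul_nonneg (sub_nonneg.mpr ha1) (mul_pos hn0 hz).le]
    have h4 : (1 - a) * (n * zh) ≤ n * zh := by nlinarith [mul_nonneg ha0 (mul_pos hn0 hzh).le]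
    have h5 : n * (z + zh) = n * z + n * zh := by ring
    simp only [hZa_def]; linarith
  have hDa_le : Da ≤ n * (d + dh) := by
    have h1 : a * p ≤ a * (n * d) := mul_le_mul_of_nonneg_left hp_le ha0
    have h2 : (1 - a) * q ≤ (1 - a) * (n * dh) :=
      mul_le_mul_of_nonneg_left hq_le (by linarith)
    have h3 : a * (n * d) ≤ n * d := by nlinarith [mul_nonneg (sub_nonneg.mpr ha1) (mul_pos hn0 hd).le]
    have h4 : (1 - a) * (n * dh) ≤ n * dh := by nlinarith [mul_nonneg ha0 (mul_pos hn0 hdh).le]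
    have h5 : n * (d + dh) = n * d + n * dh := by ring
    simp only [hDa_def]; linarith
  -- Step A : rewrite the argument
  have harg_eq : zhg * Za / (dhg * Da) = (zhg / dhg) * (Za / Da) := by
    field_simp
  have hx := ratio_mem_Icc hn hzhg hdhg
  have hA : V (zhg * Za / (dhg * Da)) ≤ C * V (Za / Da) + C' * (Za / Da + 1) := by
    rw [harg_eq]
    exact hgrow _ hx _ (div_pos hZa hDa)
  -- Step B : perspective inequality
  have hB : Da * V (Za / Da) ≤ a * p * V (u / p) + (1 - a) * q * V (v / q) := by
    have hs : 0 ≤ a * p := mul_nonneg ha0 hp.le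
    have ht : 0 ≤ (1 - a) * q := mul_nonneg (by linarith) hq.le
    have hlam0 : 0 ≤ a * p / Da := div_nonneg hs hDa.le
    have hmu0 : 0 ≤ (1 - a) * q / Da := div_nonneg ht hDa.le
    have hsum : a * p / Da + (1 - a) * q / Da = 1 := by
      rw [← add_div, ← hDa_def]; exact div_self hDa_ne'
    have hcomb : (a * p / Da) * (u / p) + ((1 - a) * q / Da) * (v / q) = Za / Da := by
      rw [hZa_def]
      field_simp
    have h := hVconv.2 (mem_Ioi.mpr (div_pos hu hp)) (mem_Ioi.mpr (div_pos hv hq))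
      hlam0 hmu0 hsum
    simp only [smul_eq_mul] at h
    rw [hcomb] at h
    have h2 := mul_le_mul_of_nonneg_left h hDa.le
    calc Da * V (Za / Da) ≤ Da * ((a * p / Da) * V (u / p) + ((1 - a) * q / Da) * V (v / q)) := h2
      _ = a * p * V (u / p) + (1 - a) * q * V (v / q) := by
          generalize V (u / p) = w1
          generalize V (v / q) = w2
          field_simp
  -- Step C : bound each perspective term
  have hupd : u / p = (dg / zg) * (z / d) := by
    rw [hu_def, hp_def]
    rw [div_div_div_eq]
    ring
  have hvqd : v / q = (dhg / zhg) * (zh / dh) := by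
    rw [hv_def, hq_def]
    rw [div_div_div_eq]
    ring
  have hC1 : p * V (u / p) ≤ n * (C * T1 + C' * (z + d)) := by
    have hl := ratio_mem_Icc hn hdg hzg
    have h1 : V (u / p) ≤ C * V (z / d) + C' * (z / d + 1) := by
      rw [hupd]; exact hgrow _ hl _ (div_pos hz hd)
    have h2 : C * V (z / d) + C' * (z / d + 1) ≤ C * |V (z / d)| + C' * (z / d + 1) := by
      have h := mul_le_mul_of_nonneg_left (le_abs_self (V (z / d))) hC.le
      linarith
    have hR : 0 ≤ C * |V (z / d)| + C' * (z / d + 1) := by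
      have ha := mul_nonneg hC.le (abs_nonneg (V (z / d)))
      have h3 : 0 < z / d := div_pos hz hd
      have hbb := mul_nonneg hC'.le (by linarith : (0:ℝ) ≤ z / d + 1)
      linarith
    have h4 : p * V (u / p) ≤ p * (C * |V (z / d)| + C' * (z / d + 1)) :=
      mul_le_mul_of_nonneg_left (le_trans h1 h2) hp.le
    have h5 : p * (C * |V (z / d)| + C' * (z / d + 1)) ≤
        (n * d) * (C * |V (z / d)| + C' * (z / d + 1)) :=
      mul_le_mul_of_nonneg_right hp_le hR
    have h6 : (n * d) * (C * |V (z / d)| + C' * (z / d + 1)) = n * (C * T1 + C' * (z + d)) := by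
      rw [hT1_def]
      generalize |V (z / d)| = w
      field_simp
    linarith
  have hC2 : q * V (v / q) ≤ n * (C * T2 + C' * (zh + dh)) := by
    have hl := ratio_mem_Icc hn hdhg hzhg
    have h1 : V (v / q) ≤ C * V (zh / dh) + C' * (zh / dh + 1) := by
      rw [hvqd]; exact hgrow _ hl _ (div_pos hzh hdh)
    have h2 : C * V (zh / dh) + C' * (zh / dh + 1) ≤ C * |V (zh / dh)| + C' * (zh / dh + 1) := by
      have h := mul_le_mul_of_nonneg_left (le_abs_self (V (zh / dh))) hC.le
      linarith
    have hR : 0 ≤ C * |V (zh / dh)| + C' * (zh / dh + 1) := by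
      have ha := mul_nonneg hC.le (abs_nonneg (V (zh / dh)))
      have h3 : 0 < zh / dh := div_pos hzh hdh
      have hbb := mul_nonneg hC'.le (by linarith : (0:ℝ) ≤ zh / dh + 1)
      linarith
    have h4 : q * V (v / q) ≤ q * (C * |V (zh / dh)| + C' * (zh / dh + 1)) :=
      mul_le_mul_of_nonneg_left (le_trans h1 h2) hq.le
    have h5 : q * (C * |V (zh / dh)| + C' * (zh / dh + 1)) ≤
        (n * dh) * (C * |V (zh / dh)| + C' * (zh / dh + 1)) :=
      mul_le_mul_of_nonneg_right hq_le hR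
    have h6 : (n * dh) * (C * |V (zh / dh)| + C' * (zh / dh + 1)) =
        n * (C * T2 + C' * (zh + dh)) := by
      rw [hT2_def]
      generalize |V (zh / dh)| = w
      field_simp
    linarith
  -- combine B and C, with coefficients a ≤ 1
  have hRC1 : 0 ≤ n * (C * T1 + C' * (z + d)) :=
    mul_nonneg hn0.le (by positivity)
  have hRC2 : 0 ≤ n * (C * T2 + C' * (zh + dh)) :=
    mul_nonneg hn0.le (by positivity)
  have hB2 : Da * V (Za / Da) ≤ n * (C * (T1 + T2) + C' * T4) := by
    have h1 : a * (p * V (u / p)) ≤ a * (n * (C * T1 + C' * (z + d))) :=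
      mul_le_mul_of_nonneg_left hC1 ha0
    have h2 : a * (n * (C * T1 + C' * (z + d))) ≤ n * (C * T1 + C' * (z + d)) := by
      nlinarith [mul_nonneg (sub_nonneg.mpr ha1) hRC1]
    have h3 : (1 - a) * (q * V (v / q)) ≤ (1 - a) * (n * (C * T2 + C' * (zh + dh))) :=
      mul_le_mul_of_nonneg_left hC2 (by linarith)
    have h4 : (1 - a) * (n * (C * T2 + C' * (zh + dh))) ≤ n * (C * T2 + C' * (zh + dh)) := by
      nlinarith [mul_nonneg ha0 hRC2]
    have h5 : n * (C * T1 + C' * (z + d)) + n * (C * T2 + C' * (zh + dh)) =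
        n * (C * (T1 + T2) + C' * T4) := by simp only [hT4_def]; ring
    have h6 : a * p * V (u / p) = a * (p * V (u / p)) := by ring
    have h7 : (1 - a) * q * V (v / q) = (1 - a) * (q * V (v / q)) := by ring
    rw [h6, h7] at hB
    linarith
  -- Step D : combine
  have hDa_ne : Da ≠ 0 := ne_of_gt hDa
  have hPhi_le : dhg * Da * V (zhg * Za / (dhg * Da)) ≤
      dhg * (C * (Da * V (Za / Da)) + C' * (Za + Da)) := by
    have h1 := mul_le_mul_of_nonneg_left hA (mul_pos hdhg0 hDa).le
    have h2 : dhg * Da * (C * V (Za / Da) + C' * (Za / Da + 1)) =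
        dhg * (C * (Da * V (Za / Da)) + C' * (Za + Da)) := by
      generalize V (Za / Da) = w
      field_simp
    linarith
  set K := n^2 * (2*C^2 + 2*C*C' + 2*C' + |b| + 1) with hK_def
  clear_value K
  have habs : 0 ≤ |b| := abs_nonneg b
  have hupper : dhg * Da * V (zhg * Za / (dhg * Da)) ≤ K * (T1 + T2 + T4) := by
    have hsum_le : Za + Da ≤ n * T4 := by
      have e : n * (z + zh) + n * (d + dh) = n * (z + zh + d + dh) := by ring
      rw [hT4_def]; linarith
    have hinner : C * (Da * V (Za / Da)) + C' * (Za + Da) ≤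
        C * (n * (C * (T1 + T2) + C' * T4)) + C' * (n * T4) := by
      have h1 := mul_le_mul_of_nonneg_left hB2 hC.le
      have h2 := mul_le_mul_of_nonneg_left hsum_le hC'.le
      linarith
    have hinner_nonneg : 0 ≤ C * (n * (C * (T1 + T2) + C' * T4)) + C' * (n * T4) := by
      have i1 : 0 ≤ C * (T1 + T2) + C' * T4 :=
        add_nonneg (mul_nonneg hC.le (add_nonneg hT1 hT2)) (mul_nonneg hC'.le hT4.le)
      exact add_nonneg (mul_nonneg hC.le (mul_nonneg hn0.le i1))
        (mul_nonneg hC'.le (mul_nonneg hn0.le hT4.le))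
    have h3 : dhg * (C * (Da * V (Za / Da)) + C' * (Za + Da)) ≤
        dhg * (C * (n * (C * (T1 + T2) + C' * T4)) + C' * (n * T4)) :=
      mul_le_mul_of_nonneg_left hinner hdhg0.le
    have h4 : dhg * (C * (n * (C * (T1 + T2) + C' * T4)) + C' * (n * T4)) ≤
        n * (C * (n * (C * (T1 + T2) + C' * T4)) + C' * (n * T4)) :=
      mul_le_mul_of_nonneg_right hdhg.2.le hinner_nonneg
    have h5 : n * (C * (n * (C * (T1 + T2) + C' * T4)) + C' * (n * T4)) ≤ K * (T1 + T2 + T4) := by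
      have hC2n : 0 ≤ C^2 := sq_nonneg C
      have hCCp : 0 ≤ C*C' := mul_nonneg hC.le hC'.le
      have g1 : 0 ≤ ((2*C^2+2*C*C'+2*C'+|b|+1) - C^2) * (T1+T2) :=
        mul_nonneg (by linarith) (add_nonneg hT1 hT2)
      have g2 : 0 ≤ ((2*C^2+2*C*C'+2*C'+|b|+1) - (C*C'+C')) * T4 :=
        mul_nonneg (by linarith) hT4.le
      have g3 : (0:ℝ) ≤ n^2 := sq_nonneg n
      have expand : K*(T1+T2+T4) - n * (C * (n * (C * (T1 + T2) + C' * T4)) + C' * (n * T4))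
          = n^2 * (((2*C^2+2*C*C'+2*C'+|b|+1) - C^2) * (T1+T2)
            + ((2*C^2+2*C*C'+2*C'+|b|+1) - (C*C'+C')) * T4) := by
        rw [hK_def]; ring
      linarith [expand, mul_nonneg g3 (add_nonneg g1 g2)]
    linarith
  have hlower : -(K * (T1 + T2 + T4)) ≤ dhg * Da * V (zhg * Za / (dhg * Da)) := by
    have hargpos : 0 < zhg * Za / (dhg * Da) := div_pos (mul_pos hzhg0 hZa) (mul_pos hdhg0 hDa)
    have h1 : dhg * Da * b ≤ dhg * Da * V (zhg * Za / (dhg * Da)) :=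
      mul_le_mul_of_nonneg_left (hb _ hargpos) (mul_pos hdhg0 hDa).le
    have h2 : dhg * Da ≤ n * (n * (d + dh)) := by
      have w1 : dhg * Da ≤ n * Da := mul_le_mul_of_nonneg_right hdhg.2.le hDa.le
      have w2 : n * Da ≤ n * (n * (d + dh)) := mul_le_mul_of_nonneg_left hDa_le hn0.le
      linarith
    have h3 : -(|b|) ≤ b := neg_abs_le b
    have h4 : -(|b| * (n * (n * (d + dh)))) ≤ dhg * Da * b := by
      have w1 : dhg * Da * (-|b|) ≤ dhg * Da * b :=
        mul_le_mul_of_nonneg_left (neg_abs_le b) (mul_pos hdhg0 hDa).le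
      have w2 : dhg * Da * |b| ≤ (n * (n * (d + dh))) * |b| :=
        mul_le_mul_of_nonneg_right h2 habs
      have w3 : dhg * Da * (-|b|) = -(dhg * Da * |b|) := by ring
      have w4 : (n * (n * (d + dh))) * |b| = |b| * (n * (n * (d + dh))) := by ring
      linarith
    have h5 : |b| * (n * (n * (d + dh))) ≤ K * (T1 + T2 + T4) := by
      have hC2n : 0 ≤ C^2 := sq_nonneg C
      have hCCp : 0 ≤ C*C' := mul_nonneg hC.le hC'.le
      have g0 : (0:ℝ) ≤ n^2 := sq_nonneg n
      have g1 : 0 ≤ (2*C^2+2*C*C'+2*C'+1) * (T1+T2+T4) :=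
        mul_nonneg (by linarith) (by linarith)
      have g2 : 0 ≤ |b| * (T1+T2) := mul_nonneg habs (by linarith)
      have gzz : (0:ℝ) ≤ T4 - (d+dh) := by rw [hT4_def]; linarith
      have g3 : 0 ≤ |b| * (T4 - (d+dh)) := mul_nonneg habs gzz
      have e : K*(T1+T2+T4) - |b| * (n * (n * (d + dh)))
          = n^2 * ((2*C^2+2*C*C'+2*C'+1) * (T1+T2+T4) + |b| * (T1+T2) + |b| * (T4 - (d+dh))) := by
        rw [hK_def]; ring
      linarith only [e, mul_nonneg g0 (add_nonneg (add_nonneg g1 g2) g3)]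
    linarith only [h1, h4, h5]
  rw [abs_le]
  constructor
  · linarith only [hlower]
  · linarith only [hupper]


/-- Lemma 5.1 (`ProofTech1`): under the growth condition on the convex function `V`
(reasonable asymptotic elasticity) and finiteness of the generalized entropies
`E[D·V(Z/D)], E[D̂·V(Ẑ/D̂)] < ∞`, the random variable
`Φ^α = D̂_𝒢 D^α V(Ẑ_𝒢 Z^α/(D̂_𝒢 D^α))` is `𝒢`-locally integrable: the sets
`A_n = {Ẑ_𝒢, Z_𝒢, D̂_𝒢, D_𝒢 ∈ (n⁻¹,n)}` are in `𝒢`, increase with `μ(A_n) ↑ 1`, and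
`1_{A_n}·Φ^α ∈ L¹(μ)` for every `n`. -/
theorem stmt_11 {Ω : Type*} (m : MeasurableSpace Ω) {mΩ : MeasurableSpace Ω} (μ : Measure Ω)
    [IsProbabilityMeasure μ]
    (hm : m ≤ mΩ)
    (Z Zh D Dh : Ω → ℝ)
    (hZmeas : Measurable Z) (hZhmeas : Measurable Zh)
    (hDmeas : Measurable D) (hDhmeas : Measurable Dh)
    (hZint : Integrable Z μ) (hZhint : Integrable Zh μ)
    (hDint : Integrable D μ) (hDhint : Integrable Dh μ)
    (hZpos : ∀ ω, 0 < Z ω) (hZhpos : ∀ ω, 0 < Zh ω)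
    (hDpos : ∀ ω, 0 < D ω) (hDhpos : ∀ ω, 0 < Dh ω)
    (hZone : ∫ ω, Z ω ∂μ = 1) (hZhone : ∫ ω, Zh ω ∂μ = 1)
    (hDone : ∫ ω, D ω ∂μ = 1) (hDhone : ∫ ω, Dh ω ∂μ = 1)
    (hZg : ∀ᵐ ω ∂μ, 0 < (μ[Z|m]) ω) (hZhg : ∀ᵐ ω ∂μ, 0 < (μ[Zh|m]) ω)
    (hDg : ∀ᵐ ω ∂μ, 0 < (μ[D|m]) ω) (hDhg : ∀ᵐ ω ∂μ, 0 < (μ[Dh|m]) ω)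
    (V : ℝ → ℝ) (hVconv : ConvexOn ℝ (Set.Ioi 0) V)
    (hVbdd : ∃ b : ℝ, ∀ y : ℝ, 0 < y → b ≤ V y)
    (hVgrowth : ∀ a : ℝ, 1 ≤ a → ∃ C C' : ℝ, 0 < C ∧ 0 < C' ∧
      ∀ l ∈ Set.Icc a⁻¹ a, ∀ y : ℝ, 0 < y → V (l * y) ≤ C * V y + C' * (y + 1))
    (hent : Integrable (fun ω => D ω * V (Z ω / D ω)) μ)
    (henth : Integrable (fun ω => Dh ω * V (Zh ω / Dh ω)) μ)
    (a : ℝ) (ha : a ∈ Set.Icc (0 : ℝ) 1) :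
    (∀ n : ℕ, MeasurableSet[m] (locSet μ m Z Zh D Dh n)) ∧
    Monotone (locSet μ m Z Zh D Dh) ∧
    Tendsto (fun n => μ (locSet μ m Z Zh D Dh n)) atTop (nhds 1) ∧
    ∀ n : ℕ, Integrable
      ((locSet μ m Z Zh D Dh n).indicator (PhiRV μ m V Z Zh D Dh a)) μ := by
  classical
  have hZgm : Measurable[m] (μ[Z|m]) := stronglyMeasurable_condExp.measurable
  have hZhgm : Measurable[m] (μ[Zh|m]) := stronglyMeasurable_condExp.measurable
  have hDgm : Measurable[m] (μ[D|m]) := stronglyMeasurable_condExp.measurable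
  have hDhgm : Measurable[m] (μ[Dh|m]) := stronglyMeasurable_condExp.measurable
  -- Part 1
  have h1 : ∀ n : ℕ, MeasurableSet[m] (locSet μ m Z Zh D Dh n) := by
    intro n
    have heq : locSet μ m Z Zh D Dh n =
        ((μ[Zh|m]) ⁻¹' (Set.Ioo ((n : ℝ)⁻¹) (n : ℝ))) ∩
        (((μ[Z|m]) ⁻¹' (Set.Ioo ((n : ℝ)⁻¹) (n : ℝ))) ∩
        (((μ[Dh|m]) ⁻¹' (Set.Ioo ((n : ℝ)⁻¹) (n : ℝ))) ∩
        ((μ[D|m]) ⁻¹' (Set.Ioo ((n : ℝ)⁻¹) (n : ℝ))))) := rfl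
    rw [heq]
    exact (hZhgm measurableSet_Ioo).inter ((hZgm measurableSet_Ioo).inter
      ((hDhgm measurableSet_Ioo).inter (hDgm measurableSet_Ioo)))
  -- Part 2
  have h2 : Monotone (locSet μ m Z Zh D Dh) := by
    intro i j hij ω hω
    obtain ⟨w1, w2, w3, w4⟩ := hω
    have key : ∀ x : ℝ, x ∈ Set.Ioo ((i : ℝ)⁻¹) (i : ℝ) →
        x ∈ Set.Ioo ((j : ℝ)⁻¹) (j : ℝ) := by
      intro x hx
      have hx0 : (0 : ℝ) ≤ (i : ℝ)⁻¹ := by positivity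
      have hipos : (0 : ℝ) < (i : ℝ) := lt_of_le_of_lt hx0 (lt_trans hx.1 hx.2)
      have hij' : (i : ℝ) ≤ (j : ℝ) := Nat.cast_le.mpr hij
      have hinv : (j : ℝ)⁻¹ ≤ (i : ℝ)⁻¹ := by
        apply inv_anti₀ hipos hij'
      exact ⟨lt_of_le_of_lt hinv hx.1, lt_of_lt_of_le hx.2 hij'⟩
    exact ⟨key _ w1, key _ w2, key _ w3, key _ w4⟩
  -- Part 3
  have h3 : Tendsto (fun n => μ (locSet μ m Z Zh D Dh n)) atTop (nhds 1) := by
    have hU := tendsto_measure_iUnion_atTop (μ := μ) h2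
    have hmeasU : MeasurableSet[mΩ] (⋃ n, locSet μ m Z Zh D Dh n) :=
      MeasurableSet.iUnion fun n => hm _ (h1 n)
    have hae : ∀ᵐ ω ∂μ, ω ∈ ⋃ n, locSet μ m Z Zh D Dh n := by
      filter_upwards [hZg, hZhg, hDg, hDhg] with ω pz pzh pd pdh
      obtain ⟨k, hk⟩ := exists_nat_gt
        (max (max (max ((μ[Z|m]) ω) ((μ[Zh|m]) ω)) (max ((μ[D|m]) ω) ((μ[Dh|m]) ω)))
          (max (max (((μ[Z|m]) ω)⁻¹) (((μ[Zh|m]) ω)⁻¹))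
            (max (((μ[D|m]) ω)⁻¹) (((μ[Dh|m]) ω)⁻¹))))
      have gk : ∀ x : ℝ, 0 < x → x < (k : ℝ) → x⁻¹ < (k : ℝ) →
          x ∈ Set.Ioo ((k : ℝ)⁻¹) (k : ℝ) :=
        fun x hx h1' h2' => ⟨inv_lt_of_inv_lt₀ hx h2', h1'⟩
      refine Set.mem_iUnion.mpr ⟨k, ?_, ?_, ?_, ?_⟩
      · exact gk _ pzh (by simp at hk ⊢; linarith [hk.1.1.2]) (by simp at hk ⊢; linarith [hk.2.1.2])
      · exact gk _ pz (by simp at hk ⊢; linarith [hk.1.1.1]) (by simp at hk ⊢; linarith [hk.2.1.1])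
      · exact gk _ pdh (by simp at hk ⊢; linarith [hk.1.2.2]) (by simp at hk ⊢; linarith [hk.2.2.2])
      · exact gk _ pd (by simp at hk ⊢; linarith [hk.1.2.1]) (by simp at hk ⊢; linarith [hk.2.2.1])
    have hone : μ (⋃ n, locSet μ m Z Zh D Dh n) = 1 := by
      rw [← prob_compl_eq_zero_iff hmeasU]
      exact ae_iff.mp hae
    rw [hone] at hU
    exact hU
  refine ⟨h1, h2, h3, ?_⟩
  -- Part 4
  intro n
  by_cases hn : n = 0
  · subst hn
    have hempty : locSet μ m Z Zh D Dh 0 = ∅ := by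
      ext ω
      simp only [locSet, Set.mem_setOf_eq, Set.mem_empty_iff_false, iff_false, not_and]
      intro h
      exfalso
      rcases h with ⟨hlt1, hlt2⟩
      simp at hlt1 hlt2
      linarith
    rw [hempty]
    simp only [Set.indicator_empty]
    exact integrable_zero _ _ _
  have hn1 : (1 : ℝ) ≤ (n : ℝ) := by exact_mod_cast Nat.one_le_iff_ne_zero.mpr hn
  have hn0 : (0 : ℝ) < (n : ℝ) := lt_of_lt_of_le one_pos hn1
  obtain ⟨b, hb⟩ := hVbdd
  obtain ⟨C, C', hC, hC', hgrow⟩ := hVgrowth ((n : ℝ) ^ 2) (by nlinarith)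
  set A := locSet μ m Z Zh D Dh n with hA_def
  have hAmeas : MeasurableSet[mΩ] A := hm _ (h1 n)
  have hZmeasO : Measurable[mΩ] Z := hZmeas
  have hZhmeasO : Measurable[mΩ] Zh := hZhmeas
  have hDmeasO : Measurable[mΩ] D := hDmeas
  have hDhmeasO : Measurable[mΩ] Dh := hDhmeas
  have hZgm' : Measurable[mΩ] (μ[Z|m]) := (stronglyMeasurable_condExp.mono hm).measurable
  have hZhgm' : Measurable[mΩ] (μ[Zh|m]) := (stronglyMeasurable_condExp.mono hm).measurable
  have hDgm' : Measurable[mΩ] (μ[D|m]) := (stronglyMeasurable_condExp.mono hm).measurable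
  have hDhgm' : Measurable[mΩ] (μ[Dh|m]) := (stronglyMeasurable_condExp.mono hm).measurable
  have i1 : Measurable[mΩ] fun ω => a * (Z ω / (μ[Z|m]) ω) := (hZmeasO.div hZgm').const_mul a
  have i2 : Measurable[mΩ] fun ω => (1 - a) * (Zh ω / (μ[Zh|m]) ω) :=
    (hZhmeasO.div hZhgm').const_mul (1 - a)
  have i3 : Measurable[mΩ] fun ω => a * (D ω / (μ[D|m]) ω) := (hDmeasO.div hDgm').const_mul a
  have i4 : Measurable[mΩ] fun ω => (1 - a) * (Dh ω / (μ[Dh|m]) ω) :=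
    (hDhmeasO.div hDhgm').const_mul (1 - a)
  have hccZ : Measurable[mΩ] (condComb μ m Z Zh a) := by
    unfold condComb
    exact i1.add i2
  have hccD : Measurable[mΩ] (condComb μ m D Dh a) := by
    unfold condComb
    exact i3.add i4
  have hargmeas : Measurable[mΩ] (fun ω => (μ[Zh|m]) ω * condComb μ m Z Zh a ω /
      ((μ[Dh|m]) ω * condComb μ m D Dh a ω)) := (hZhgm'.mul hccZ).div (hDhgm'.mul hccD)
  set W : ℝ → ℝ := (Set.Ioi (0 : ℝ)).piecewise V (fun _ => 0) with hW_def
  have hWmeas : Measurable W :=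
    ContinuousOn.measurable_piecewise (hVconv.continuousOn isOpen_Ioi)
      continuousOn_const measurableSet_Ioi
  have hPhiWmeas : Measurable[mΩ] (fun ω => (μ[Dh|m]) ω * condComb μ m D Dh a ω *
      W ((μ[Zh|m]) ω * condComb μ m Z Zh a ω / ((μ[Dh|m]) ω * condComb μ m D Dh a ω))) :=
    (hDhgm'.mul hccD).mul (hWmeas.comp hargmeas)
  have hninv : (0 : ℝ) < (n : ℝ)⁻¹ := by positivity
  -- positivity of the argument on A
  have hargpos : ∀ ω ∈ A, 0 < (μ[Zh|m]) ω * condComb μ m Z Zh a ω /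
      ((μ[Dh|m]) ω * condComb μ m D Dh a ω) := by
    intro ω hω
    obtain ⟨w1, w2, w3, w4⟩ := hω
    have p1 : 0 < (μ[Zh|m]) ω := lt_trans hninv w1.1
    have p2 : 0 < (μ[Z|m]) ω := lt_trans hninv w2.1
    have p3 : 0 < (μ[Dh|m]) ω := lt_trans hninv w3.1
    have p4 : 0 < (μ[D|m]) ω := lt_trans hninv w4.1
    have c1 : 0 < condComb μ m Z Zh a ω :=
      comb_pos ha.1 ha.2 (div_pos (hZpos ω) p2) (div_pos (hZhpos ω) p1)
    have c2 : 0 < condComb μ m D Dh a ω :=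
      comb_pos ha.1 ha.2 (div_pos (hDpos ω) p4) (div_pos (hDhpos ω) p3)
    exact div_pos (mul_pos p1 c1) (mul_pos p3 c2)
  -- indicator equality : replace V by its measurable version W
  have hind_eq : A.indicator (PhiRV μ m V Z Zh D Dh a) =
      A.indicator (fun ω => (μ[Dh|m]) ω * condComb μ m D Dh a ω *
        W ((μ[Zh|m]) ω * condComb μ m Z Zh a ω / ((μ[Dh|m]) ω * condComb μ m D Dh a ω))) := by
    funext ω
    by_cases hω : ω ∈ A
    · rw [Set.indicator_of_mem hω, Set.indicator_of_mem hω]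
      unfold PhiRV
      congr 1
      exact (Set.piecewise_eq_of_mem _ _ _ (hargpos ω hω)).symm
    · rw [Set.indicator_of_notMem hω, Set.indicator_of_notMem hω]
  -- the dominating function
  have hKpos : 0 ≤ (n : ℝ) ^ 2 * (2 * C ^ 2 + 2 * C * C' + 2 * C' + |b| + 1) := by
    have := abs_nonneg b
    have := mul_pos hC hC'
    have := sq_nonneg C
    nlinarith [sq_nonneg (n : ℝ)]
  have g1 : Integrable (fun ω => D ω * |V (Z ω / D ω)|) μ :=
    hent.abs.congr (Filter.Eventually.of_forall fun ω =>
      show |D ω * V (Z ω / D ω)| = D ω * |V (Z ω / D ω)| by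
        rw [abs_mul, abs_of_pos (hDpos ω)])
  have g2 : Integrable (fun ω => Dh ω * |V (Zh ω / Dh ω)|) μ :=
    henth.abs.congr (Filter.Eventually.of_forall fun ω =>
      show |Dh ω * V (Zh ω / Dh ω)| = Dh ω * |V (Zh ω / Dh ω)| by
        rw [abs_mul, abs_of_pos (hDhpos ω)])
  have hGint : Integrable (fun ω => ((n : ℝ) ^ 2 * (2 * C ^ 2 + 2 * C * C' + 2 * C' + |b| + 1)) *
      (D ω * |V (Z ω / D ω)| + Dh ω * |V (Zh ω / Dh ω)| +
        (Z ω + Zh ω + D ω + Dh ω))) μ :=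
    ((g1.add g2).add (((hZint.add hZhint).add hDint).add hDhint)).const_mul _
  rw [hind_eq]
  refine Integrable.mono' hGint (hPhiWmeas.indicator hAmeas).aestronglyMeasurable
    (Filter.Eventually.of_forall fun ω => ?_)
  by_cases hω : ω ∈ A
  · rw [Set.indicator_of_mem hω]
    have hWV : W ((μ[Zh|m]) ω * condComb μ m Z Zh a ω /
        ((μ[Dh|m]) ω * condComb μ m D Dh a ω)) =
        V ((μ[Zh|m]) ω * condComb μ m Z Zh a ω / ((μ[Dh|m]) ω * condComb μ m D Dh a ω)) :=
      Set.piecewise_eq_of_mem _ _ _ (hargpos ω hω)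
    rw [Real.norm_eq_abs, hWV]
    obtain ⟨w1, w2, w3, w4⟩ := hω
    have hkey := key_bound V hVconv hb hn1 hC hC' hgrow ha.1 ha.2
      (hZpos ω) (hZhpos ω) (hDpos ω) (hDhpos ω) w2 w1 w4 w3
    simpa [condComb] using hkey
  · rw [Set.indicator_of_notMem hω]
    simp only [norm_zero]
    have t1 : 0 ≤ D ω * |V (Z ω / D ω)| := mul_nonneg (hDpos ω).le (abs_nonneg _)
    have t2 : 0 ≤ Dh ω * |V (Zh ω / Dh ω)| := mul_nonneg (hDhpos ω).le (abs_nonneg _)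
    have t4 : 0 ≤ Z ω + Zh ω + D ω + Dh ω := by
      linarith [hZpos ω, hZhpos ω, hDpos ω, hDhpos ω]
    exact mul_nonneg hKpos (by linarith)
end

section
/- Let (Ω,ℱ,ℙ) be a probability space and 𝒢 ⊆ ℱ a sub-σ-algebra. Let Z, Ẑ, D, D̂ be strictly positive integrable random variables with unit expectation, write Z_𝒢 := E[Z|𝒢] etc., and for α ∈ [0,1] set Z^α := α·Z/Z_𝒢 + (1−α)·Ẑ/Ẑ_𝒢 and D^α := α·D/D_𝒢 + (1−α)·D̂/D̂_𝒢. Let V : (0,∞) → ℝ be convex and bounded below, assume D·V(Z/D) ∈ L¹(ℙ), D̂·V(Ẑ/D̂) ∈ L¹(ℙ), and assume Φ^α := D̂_𝒢 D^α V(Ẑ_𝒢 Z^α/(D̂_𝒢 D^α)) is 𝒢-locally integrable (there exist A_n ∈ 𝒢 with ℙ(A_n) ↑ 1 and 1_{A_n}Φ^α ∈ L¹). Assume the following optimality (m-stability) hypothesis: for every C ∈ 𝒢, the pasted densities Z̄ := 1_{Cᶜ}·Ẑ + 1_C·Ẑ_𝒢 Z^α and D̄ := 1_{Cᶜ}·D̂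 + 1_C·D̂_𝒢 D^α satisfy E[D̄·V(Z̄/D̄)] ≥ E[D̂·V(Ẑ/D̂)] whenever D̄·V(Z̄/D̄) ∈ L¹(ℙ). Then E[D̂·V(Ẑ/D̂) | 𝒢] ≤ E[Φ^α | 𝒢] ℙ-almost surely (the inequality holding a.s. on each A_n with the conditional expectations of the 1_{A_n}-truncated variables). -/
open MeasureTheory Filter Set

/- Pasting of two densities along a set `C ∈ 𝒢`: `1_{Cᶜ}·f + 1_C·g`. -/
noncomputable def pasteRV {Ω : Type*} (C : Set Ω) (f g : Ω → ℝ) (ω : Ω) : ℝ :=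
  Cᶜ.indicator f ω + C.indicator g ω

/-- Lemma 5.2 (`DynVI1`), Bellman-type principle: if the pair `(Ẑ, D̂)` is optimal under
pasting (m-stability of the underlying sets of measures), then a.s. on each localizing
set `A_n`, `E[D̂·V(Ẑ/D̂)|𝒢] ≤ E[Φ^α|𝒢]` (conditional expectations of the
`1_{A_n}`-truncated variables). -/
theorem stmt_12 {Ω : Type*} (m : MeasurableSpace Ω) {mΩ : MeasurableSpace Ω} (μ : Measure Ω)
    [IsProbabilityMeasure μ]
    (hm : m ≤ mΩ)
    (Z Zh D Dh : Ω → ℝ)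
    (hZmeas : Measurable Z) (hZhmeas : Measurable Zh)
    (hDmeas : Measurable D) (hDhmeas : Measurable Dh)
    (hZint : Integrable Z μ) (hZhint : Integrable Zh μ)
    (hDint : Integrable D μ) (hDhint : Integrable Dh μ)
    (hZpos : ∀ ω, 0 < Z ω) (hZhpos : ∀ ω, 0 < Zh ω)
    (hDpos : ∀ ω, 0 < D ω) (hDhpos : ∀ ω, 0 < Dh ω)
    (hZone : ∫ ω, Z ω ∂μ = 1) (hZhone : ∫ ω, Zh ω ∂μ = 1)
    (hDone : ∫ ω, D ω ∂μ = 1) (hDhone : ∫ ω, Dh ω ∂μ = 1)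
    (V : ℝ → ℝ) (hVconv : ConvexOn ℝ (Set.Ioi 0) V)
    (hVbdd : ∃ b : ℝ, ∀ y : ℝ, 0 < y → b ≤ V y)
    (hent : Integrable (fun ω => D ω * V (Z ω / D ω)) μ)
    (henth : Integrable (fun ω => Dh ω * V (Zh ω / Dh ω)) μ)
    (a : ℝ) (ha : a ∈ Set.Icc (0 : ℝ) 1)
    (A : ℕ → Set Ω)
    (hAmeas : ∀ n, MeasurableSet[m] (A n))
    (hAmono : Monotone A)
    (hAtend : Tendsto (fun n => μ (A n)) atTop (nhds 1))
    (hAint : ∀ n, Integrable ((A n).indicator (PhiRV μ m V Z Zh D Dh a)) μ)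
    (hopt : ∀ C : Set Ω, MeasurableSet[m] C →
      Integrable (fun ω =>
        pasteRV C Dh (fun ω' => (μ[Dh|m]) ω' * condComb μ m D Dh a ω') ω
          * V (pasteRV C Zh (fun ω' => (μ[Zh|m]) ω' * condComb μ m Z Zh a ω') ω
              / pasteRV C Dh (fun ω' => (μ[Dh|m]) ω' * condComb μ m D Dh a ω') ω)) μ →
      ∫ ω, Dh ω * V (Zh ω / Dh ω) ∂μ
        ≤ ∫ ω, pasteRV C Dh (fun ω' => (μ[Dh|m]) ω' * condComb μ m D Dh a ω') ω
            * V (pasteRV C Zh (fun ω' => (μ[Zh|m]) ω' * condComb μ m Z Zh a ω') ω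
                / pasteRV C Dh (fun ω' => (μ[Dh|m]) ω' * condComb μ m D Dh a ω') ω) ∂μ) :
    ∀ n : ℕ, ∀ᵐ ω ∂μ, ω ∈ A n →
      (μ[(A n).indicator (fun ω' => Dh ω' * V (Zh ω' / Dh ω'))|m]) ω
        ≤ (μ[(A n).indicator (PhiRV μ m V Z Zh D Dh a)|m]) ω := by
  intro n
  letI _inst : MeasurableSpace Ω := mΩ
  set f : Ω → ℝ := fun ω => Dh ω * V (Zh ω / Dh ω) with hf
  set g : Ω → ℝ := PhiRV μ m V Z Zh D Dh a with hg
  set F : Ω → ℝ := μ[(A n).indicator f|m] with hF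
  set G : Ω → ℝ := μ[(A n).indicator g|m] with hG
  have hfA : Integrable ((A n).indicator f) μ := henth.indicator (hm _ (hAmeas n))
  have hgA : Integrable ((A n).indicator g) μ := hAint n
  have hFsm : StronglyMeasurable[m] F := stronglyMeasurable_condExp
  have hGsm : StronglyMeasurable[m] G := stronglyMeasurable_condExp
  -- Key step: for each ε > 0, the set where `F ≥ G + ε` inside `A n` is null.
  have key : ∀ ε : ℝ, 0 < ε → μ (A n ∩ {ω | G ω + ε ≤ F ω}) = 0 := by
    intro ε hε
    set C : Set Ω := A n ∩ {ω | G ω + ε ≤ F ω} with hCdef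
    have hsetm : MeasurableSet[m] {ω | G ω + ε ≤ F ω} :=
      (hGsm.add stronglyMeasurable_const).measurableSet_le hFsm
    have hCm : MeasurableSet[m] C := (hAmeas n).inter hsetm
    have hCmeas : MeasurableSet[mΩ] C := hm _ hCm
    have hCA : C ⊆ A n := Set.inter_subset_left
    -- the pasted entropy function equals `1_{Cᶜ} f + 1_C g`
    have hpaste : (fun ω =>
        pasteRV C Dh (fun ω' => (μ[Dh|m]) ω' * condComb μ m D Dh a ω') ω
          * V (pasteRV C Zh (fun ω' => (μ[Zh|m]) ω' * condComb μ m Z Zh a ω') ω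
              / pasteRV C Dh (fun ω' => (μ[Dh|m]) ω' * condComb μ m D Dh a ω') ω))
        = fun ω => Cᶜ.indicator f ω + C.indicator g ω := by
      funext ω
      by_cases hω : ω ∈ C
      · simp [pasteRV, hω, hg, PhiRV]
      · simp [pasteRV, hω, hf]
    have hCfc : Integrable (Cᶜ.indicator f) μ := henth.indicator hCmeas.compl
    have hCf : Integrable (C.indicator f) μ := henth.indicator hCmeas
    have hCg : Integrable (C.indicator g) μ := by
      have h := hgA.indicator hCmeas
      rwa [Set.indicator_indicator, Set.inter_eq_left.mpr hCA] at h
    have hintsum : Integrable (fun ω => Cᶜ.indicator f ω + C.indicator g ω) μ :=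
      hCfc.add hCg
    have hle := hopt C hCm (by rw [hpaste]; exact hintsum)
    rw [hpaste] at hle
    have h1 : ∫ ω, (Cᶜ.indicator f ω + C.indicator g ω) ∂μ
        = ∫ ω, Cᶜ.indicator f ω ∂μ + ∫ ω, C.indicator g ω ∂μ := integral_add hCfc hCg
    have h2 : ∫ ω, f ω ∂μ = ∫ ω, Cᶜ.indicator f ω ∂μ + ∫ ω, C.indicator f ω ∂μ := by
      rw [← integral_add hCfc hCf]
      congr 1
      funext ω
      by_cases hω : ω ∈ C <;> simp [hω]
    have hCfg : ∫ ω, C.indicator f ω ∂μ ≤ ∫ ω, C.indicator g ω ∂μ := by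
      rw [h1] at hle
      linarith [hle, h2]
    -- rewrite as set integrals of conditional expectations
    have e1 : ∫ ω, C.indicator f ω ∂μ = ∫ ω in C, F ω ∂μ := by
      rw [MeasureTheory.integral_indicator hCmeas, hF, setIntegral_condExp hm hfA hCm]
      exact (setIntegral_congr_fun hCmeas fun x hx => by
        simp [Set.indicator_of_mem (hCA hx)]).symm
    have e2 : ∫ ω, C.indicator g ω ∂μ = ∫ ω in C, G ω ∂μ := by
      rw [MeasureTheory.integral_indicator hCmeas, hG, setIntegral_condExp hm hgA hCm]
      exact (setIntegral_congr_fun hCmeas fun x hx => by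
        simp [Set.indicator_of_mem (hCA hx)]).symm
    have hGon : IntegrableOn G C μ := integrable_condExp.integrableOn
    have hFon : IntegrableOn F C μ := integrable_condExp.integrableOn
    have hconst : IntegrableOn (fun _ : Ω => ε) C μ :=
      (integrable_const ε).integrableOn
    have hmono : ∫ ω in C, (G ω + ε) ∂μ ≤ ∫ ω in C, F ω ∂μ :=
      setIntegral_mono_on (hGon.add hconst) hFon hCmeas fun ω hω => hω.2
    have hsplit : ∫ ω in C, (G ω + ε) ∂μ
        = ∫ ω in C, G ω ∂μ + ε * (μ C).toReal := by
      rw [MeasureTheory.integral_add hGon hconst, setIntegral_const, smul_eq_mul, mul_comm, measureReal_def]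
    have hzero : ε * (μ C).toReal ≤ 0 := by
      rw [hsplit] at hmono
      rw [e1, e2] at hCfg
      linarith
    have htr : (μ C).toReal = 0 := by
      nlinarith [ENNReal.toReal_nonneg (a := μ C)]
    have hfin : μ C ≠ ⊤ := measure_ne_top μ C
    exact ((ENNReal.toReal_eq_zero_iff _).mp htr).resolve_right hfin
  -- assemble: the bad set is covered by a countable union of null sets
  have hsub : {ω | ¬(ω ∈ A n → F ω ≤ G ω)}
      ⊆ ⋃ k : ℕ, A n ∩ {ω | G ω + 1 / (k + 1 : ℝ) ≤ F ω} := by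
    intro ω hω
    rw [Set.mem_setOf_eq, _root_.not_imp] at hω
    obtain ⟨hA, hlt⟩ := hω
    obtain ⟨k, hk⟩ := exists_nat_one_div_lt (sub_pos.mpr (lt_of_not_ge hlt))
    exact Set.mem_iUnion.mpr ⟨k, hA, show G ω + 1 / (k + 1 : ℝ) ≤ F ω by linarith⟩
  have hnull : μ (⋃ k : ℕ, A n ∩ {ω | G ω + 1 / (k + 1 : ℝ) ≤ F ω}) = 0 :=
    measure_iUnion_null fun k => key (1 / (k + 1 : ℝ)) (by positivity)
  rw [ae_iff]
  exact measure_mono_null hsub hnull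
end
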